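/- arXiv:0708.0846 — 13 statements merged into one kernel-verified Lean document; each statement's English description precedes it below -/
import Mathlib

section
/- In the N-player Gaussian interference game over K identical frequency bins with frequency-flat channel coefficients, the flat power allocations form a Nash equilibrium: if every player j ≠ n transmits the flat power vector p_j(k) = P_j/K for all k, then for every admissible power vector q for player n (q(k) ≥ 0 for all k and Σ_{k=1}^K q(k) = P_n), the payoff of player n satisfies Σ_{k=1}^K log₂(1 + |h_{nn}|² q(k) / (Σ_{j≠n} |h_{nj}|² P_j/K + σ_n²)) ≤ K · log₂(1 + |h_{nn}|² (P_n/K) / (Σ_{j≠n} |h_{nj}|² P_j/K + σ_n²)). -/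
/-- In the N-player Gaussian interference game over K identical frequency bins with
frequency-flat channel coefficients, flat power allocation is a best response
to flat power allocations of all other players: for every admissible power
vector `q` for player `n`, its payoff is at most `K` times the per-bin rate
obtained with the flat allocation `P n / K`. -/
theorem flat_power_nash_equilibrium
    (N K : ℕ) (hK : 0 < K)
    (h : Fin N → Fin N → ℂ)
    (P : Fin N → ℝ) (hP : ∀ i, 0 < P i)
    (σsq : Fin N → ℝ) (hσ : ∀ i, 0 < σsq i)
    (n : Fin N) (hnn : 0 < ‖h n n‖)
    (q : Fin K → ℝ) (hq : ∀ k, 0 ≤ q k) (hqsum : ∑ k, q k = P n) :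
    ∑ _k : Fin K, Real.logb 2 (1 + ‖h n n‖ ^ 2 * q _k /
        ((∑ j ∈ Finset.univ.erase n, ‖h n j‖ ^ 2 * (P j / K)) + σsq n)) ≤
    (K : ℝ) * Real.logb 2 (1 + ‖h n n‖ ^ 2 * (P n / K) /
        ((∑ j ∈ Finset.univ.erase n, ‖h n j‖ ^ 2 * (P j / K)) + σsq n)) := by
  set D : ℝ := (∑ j ∈ Finset.univ.erase n, ‖h n j‖ ^ 2 * (P j / K)) + σsq n with hD
  have hDpos : 0 < D := by
    apply add_pos_of_nonneg_of_pos _ (hσ n)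
    apply Finset.sum_nonneg
    intro j _
    exact mul_nonneg (by positivity) (div_nonneg (hP j).le (Nat.cast_nonneg K))
  set c : ℝ := ‖h n n‖ ^ 2 / D with hc
  have hcpos : 0 < c := div_pos (pow_pos hnn 2) hDpos
  have hKR : (0:ℝ) < (K:ℝ) := by exact_mod_cast hK
  have hterm : ∀ k : Fin K,
      1 + ‖h n n‖ ^ 2 * q k / D = 1 + c * q k := by
    intro k; rw [hc]; ring
  have hflat : 1 + ‖h n n‖ ^ 2 * (P n / K) / D = 1 + c * (P n / K) := by
    rw [hc]; ring
  set x : Fin K → ℝ := fun k => 1 + c * q k with hx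
  have hx1 : ∀ k, (1:ℝ) ≤ x k := by
    intro k
    have : 0 ≤ c * q k := mul_nonneg hcpos.le (hq k)
    simp only [hx]; linarith
  have hxpos : ∀ k, (0:ℝ) < x k := fun k => lt_of_lt_of_le one_pos (hx1 k)
  have hxsum : ∑ k, x k = (K:ℝ) * (1 + c * (P n / K)) := by
    simp only [hx, Finset.sum_add_distrib, ← Finset.mul_sum, hqsum,
      Finset.sum_const, Finset.card_univ, Fintype.card_fin, nsmul_eq_mul]
    field_simp
    try ring
  set A : ℝ := 1 + c * (P n / K) with hA
  have hApos : 0 < A := by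
    rw [hA]
    have : 0 < c * (P n / K) := mul_pos hcpos (div_pos (hP n) hKR)
    linarith
  -- AM-GM: ∏ x k ^ (1/K) ≤ ∑ (1/K) * x k = A
  have hamgm : ∏ k, x k ^ ((K:ℝ)⁻¹) ≤ A := by
    have := Real.geom_mean_le_arith_mean_weighted Finset.univ
      (fun _ : Fin K => (K:ℝ)⁻¹) x (fun _ _ => by positivity)
      (by simp [Finset.card_univ]; field_simp) (fun k _ => (hxpos k).le)
    calc ∏ k, x k ^ ((K:ℝ)⁻¹) ≤ ∑ k, (K:ℝ)⁻¹ * x k := this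
      _ = (K:ℝ)⁻¹ * ∑ k, x k := by rw [Finset.mul_sum]
      _ = A := by rw [hxsum]; field_simp
  have hprod : ∏ k, x k ≤ A ^ (K:ℕ) := by
    have hpp : (0:ℝ) ≤ ∏ k, x k := Finset.prod_nonneg fun k _ => (hxpos k).le
    have h1 : (∏ k, x k) ^ ((K:ℝ)⁻¹) = ∏ k, x k ^ ((K:ℝ)⁻¹) := by
      rw [← Real.finset_prod_rpow _ _ (fun k _ => (hxpos k).le)]
    have h2 : (∏ k, x k) ^ ((K:ℝ)⁻¹) ≤ A := h1 ▸ hamgm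
    have h3 : ((∏ k, x k) ^ ((K:ℝ)⁻¹)) ^ (K:ℝ) ≤ A ^ (K:ℝ) :=
      Real.rpow_le_rpow (Real.rpow_nonneg hpp _) h2 hKR.le
    calc ∏ k, x k = (∏ k, x k) ^ ((K:ℝ)⁻¹ * (K:ℝ)) := by
          rw [inv_mul_cancel₀ hKR.ne', Real.rpow_one]
      _ = ((∏ k, x k) ^ ((K:ℝ)⁻¹)) ^ (K:ℝ) := Real.rpow_mul hpp _ _
      _ ≤ A ^ (K:ℝ) := h3
      _ = A ^ (K:ℕ) := by rw [Real.rpow_natCast]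
  -- take logb 2
  calc ∑ _k : Fin K, Real.logb 2 (1 + ‖h n n‖ ^ 2 * q _k / D)
      = ∑ k, Real.logb 2 (x k) := by
        apply Finset.sum_congr rfl; intro k _; rw [hterm k]
    _ = Real.logb 2 (∏ k, x k) := by
        rw [Real.logb_prod _ _ (fun k _ => (hxpos k).ne')]
    _ ≤ Real.logb 2 (A ^ (K:ℕ)) := by
        exact Real.logb_le_logb_of_le (by norm_num)
          (Finset.prod_pos (fun k _ => hxpos k)) hprod
    _ = (K:ℝ) * Real.logb 2 A := by rw [Real.logb_pow]
    _ = (K:ℝ) * Real.logb 2 (1 + ‖h n n‖ ^ 2 * (P n / K) / D) := by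
        rw [hflat]
end

section
/- Let N ≥ 1 and let x_1, …, x_N > 0 (the signal-to-noise ratios SNR_n) and y_1, …, y_N > 0 (the normalized interference powers y_n = Σ_{j≠n} α_{nj} SNR_j). Then there exists a vector (ρ_1, …, ρ_N) with ρ_n > 0 for all n, Σ_{n=1}^N ρ_n ≤ 1, and ρ_n · log(1 + x_n/ρ_n) ≥ log(1 + x_n/(1 + y_n)) for every n (i.e., every player achieves at least its competitive rate by FDM, so a Nash bargaining solution exists), if and only if Σ_{n=1}^N f(x_n, y_n) ≤ 1. -/
/-- `ρ ↦ ρ * log(1 + x/ρ)` is strictly increasing on `(0, ∞)` for fixed `x > 0`. -/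
lemma aux_strictMono (x : ℝ) (hx : 0 < x) :
    StrictMonoOn (fun ρ : ℝ => ρ * Real.log (1 + x / ρ)) (Set.Ioi 0) := by
  have hF : StrictMonoOn (fun ρ : ℝ => ρ * (Real.log (ρ + x) - Real.log ρ)) (Set.Ioi 0) := by
    have hderiv : ∀ ρ : ℝ, 0 < ρ →
        HasDerivAt (fun ρ : ℝ => ρ * (Real.log (ρ + x) - Real.log ρ))
          (1 * (Real.log (ρ + x) - Real.log ρ) + ρ * (1 / (ρ + x) - 1 / ρ)) ρ := by
      intro ρ hρ
      have h1 : HasDerivAt (fun ρ : ℝ => Real.log (ρ + x)) (1 / (ρ + x)) ρ := by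
        have := ((hasDerivAt_id ρ).add_const x).log (by positivity)
        simpa using this
      have h2 : HasDerivAt Real.log (1 / ρ) ρ := by
        simpa [one_div] using Real.hasDerivAt_log (ne_of_gt hρ)
      exact (hasDerivAt_id ρ).mul (h1.sub h2)
    apply strictMonoOn_of_deriv_pos (convex_Ioi 0)
    · intro ρ hρ
      exact ((hderiv ρ hρ).continuousAt).continuousWithinAt
    · intro ρ hρ
      rw [interior_Ioi] at hρ
      have hρ' : (0:ℝ) < ρ := hρ
      rw [(hderiv ρ hρ').deriv]
      have hs : Real.log (ρ / (ρ + x)) < ρ / (ρ + x) - 1 :=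
        Real.log_lt_sub_one_of_pos (by positivity) (by
          intro h
          have : ρ = ρ + x := by
            field_simp at h; linarith
          linarith)
      rw [Real.log_div (ne_of_gt hρ') (by positivity)] at hs
      have hx' : (0:ℝ) < ρ + x := by linarith
      have h3 : ρ * (1 / (ρ + x) - 1 / ρ) = ρ / (ρ + x) - 1 := by
        field_simp
      rw [h3]
      linarith
  intro a ha b hb hab
  have ha' : (0:ℝ) < a := ha
  have hb' : (0:ℝ) < b := hb
  have e : ∀ ρ : ℝ, 0 < ρ → ρ * Real.log (1 + x / ρ) = ρ * (Real.log (ρ + x) - Real.log ρ) := by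
    intro ρ hρ
    have : 1 + x / ρ = (ρ + x) / ρ := by field_simp
    rw [this, Real.log_div (by positivity) (ne_of_gt hρ)]
  simpa [e a ha', e b hb'] using hF ha hb hab

/-- A Nash bargaining solution (an FDM allocation giving every player at least its
competitive rate) exists in the N-player flat-fading interference game if and
only if `∑ n, f (SNR_n) (y_n) ≤ 1`, where `f(x,y)` is the unique `ρ ∈ (0,1)`
with `(1 + x/ρ)^ρ = 1 + x/(1+y)`. -/
theorem nbs_exists_iff_sum_f_le_one
    (N : ℕ) (hN : 1 ≤ N) (x y : Fin N → ℝ)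
    (hx : ∀ n, 0 < x n) (hy : ∀ n, 0 < y n)
    (f : ℝ → ℝ → ℝ)
    (hf : ∀ a b : ℝ, 0 < a → 0 < b →
      f a b ∈ Set.Ioo (0 : ℝ) 1 ∧ (1 + a / f a b) ^ (f a b) = 1 + a / (1 + b)) :
    (∃ ρ : Fin N → ℝ, (∀ n, 0 < ρ n) ∧ (∑ n, ρ n) ≤ 1 ∧
      ∀ n, Real.log (1 + x n / (1 + y n)) ≤ ρ n * Real.log (1 + x n / ρ n)) ↔
    (∑ n, f (x n) (y n)) ≤ 1 := by
  have key : ∀ a b : ℝ, 0 < a → 0 < b →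
      f a b * Real.log (1 + a / f a b) = Real.log (1 + a / (1 + b)) := by
    intro a b ha hb
    obtain ⟨⟨h0, h1⟩, heq⟩ := hf a b ha hb
    have hbase : 0 < 1 + a / f a b := by positivity
    rw [← Real.log_rpow hbase, heq]
  constructor
  · rintro ⟨ρ, hρpos, hρsum, hρ⟩
    refine le_trans (Finset.sum_le_sum fun n _ => ?_) hρsum
    by_contra hlt
    push_neg at hlt
    have hfpos := (hf (x n) (y n) (hx n) (hy n)).1.1
    have h1 := aux_strictMono (x n) (hx n) (Set.mem_Ioi.2 (hρpos n))
      (Set.mem_Ioi.2 hfpos) hlt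
    have h2 := hρ n
    rw [← key (x n) (y n) (hx n) (hy n)] at h2
    simp only at h1
    linarith
  · intro hsum
    refine ⟨fun n => f (x n) (y n), fun n => (hf _ _ (hx n) (hy n)).1.1, hsum, fun n => ?_⟩
    rw [← key (x n) (y n) (hx n) (hy n)]
end

section
/- Let α > 0 and S > 0 satisfy 2α²S ≥ 1. Then √(1 + 2S) ≥ 1 + S/(1 + αS); consequently f(S, αS) ≤ 1/2, so in the symmetric two-player flat-fading interference game with SNR₁ = SNR₂ = S and symmetric interference coefficient α, f(S, αS) + f(S, αS) ≤ 1 and an FDM Nash bargaining solution exists. -/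
/-- In the symmetric two-player flat-fading game with `2α²S ≥ 1` one has
`√(1+2S) ≥ 1 + S/(1+αS)`, hence `f(S, αS) ≤ 1/2` and
`f(S, αS) + f(S, αS) ≤ 1`, so an FDM Nash bargaining solution exists. -/
theorem symmetric_nbs_exists
    (f : ℝ → ℝ → ℝ)
    (hf : ∀ a b : ℝ, 0 < a → 0 < b →
      f a b ∈ Set.Ioo (0 : ℝ) 1 ∧ (1 + a / f a b) ^ (f a b) = 1 + a / (1 + b))
    (α S : ℝ) (hα : 0 < α) (hS : 0 < S) (h : 1 ≤ 2 * α ^ 2 * S) :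
    1 + S / (1 + α * S) ≤ Real.sqrt (1 + 2 * S) ∧
    f S (α * S) ≤ 1 / 2 ∧
    f S (α * S) + f S (α * S) ≤ 1 := by
  have hA : (0:ℝ) < 1 + α * S := by positivity
  have key : (1 + S / (1 + α * S)) ^ 2 ≤ 1 + 2 * S := by
    have e : 1 + S / (1 + α * S) = (1 + α * S + S) / (1 + α * S) := by field_simp
    rw [e, div_pow, div_le_iff₀ (by positivity)]
    nlinarith [mul_pos hα hS, sq_nonneg (α * S), mul_pos (mul_pos hα hS) hS]
  have h1 : 1 + S / (1 + α * S) ≤ Real.sqrt (1 + 2 * S) :=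
    (Real.le_sqrt (by positivity) (by positivity)).mpr key
  obtain ⟨⟨hρ0, hρ1⟩, heq⟩ := hf S (α * S) hS (mul_pos hα hS)
  set ρ := f S (α * S) with hρ
  have hρhalf : ρ ≤ 1 / 2 := by
    by_contra hlt
    push_neg at hlt
    have ht : 0 < S / ρ := div_pos hS hρ0
    have hb := one_add_mul_self_lt_rpow_one_add (s := S / ρ) (by linarith) ht.ne'
      (p := 2 * ρ) (by linarith)
    have hsq : ((1 + S / ρ) ^ ρ) ^ 2 = (1 + S / ρ) ^ (2 * ρ) := by
      rw [← Real.rpow_natCast ((1 + S / ρ) ^ ρ) 2, ← Real.rpow_mul (by positivity)]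
      norm_num [mul_comm]
    rw [heq] at hsq
    have h2 : 2 * ρ * (S / ρ) = 2 * S := by
      field_simp
    rw [h2] at hb
    rw [← hsq] at hb
    linarith
  exact ⟨h1, hρhalf, by linarith⟩
end

section
/- Let α, β > 0 and z > 0. Then there exists a constant g such that for all S₁ > g, setting S₂ = S₁/z (so the ratio SNR₁/SNR₂ = z is fixed), f(S₁, α·S₂) + f(S₂, β·S₁) < 1; i.e., if SNR₁ and SNR₂ increase jointly with fixed ratio z, then for all sufficiently large SNR₁ an FDM Nash bargaining solution exists. -/
/-- Key bound: if `ρ ∈ (0,1)` satisfies the defining equation with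
`1 + a/(1+b) ≤ K` and `K^2 ≤ 1 + a`, then `ρ < 1/2`. -/
lemma aux_rho_lt_half (a b K ρ : ℝ) (ha : 0 < a) (hb : 0 < b)
    (hρ0 : 0 < ρ) (hρ1 : ρ < 1)
    (heq : (1 + a / ρ) ^ ρ = 1 + a / (1 + b))
    (hK : 1 + a / (1 + b) ≤ K) (hK2 : K ^ 2 ≤ 1 + a) : ρ < 1 / 2 := by
  by_contra h
  push_neg at h
  have hb1 : (0:ℝ) < 1 + b := by linarith
  have ha1 : (1:ℝ) ≤ 1 + a := by linarith
  have hKpos : (0:ℝ) ≤ K := by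
    have : (0:ℝ) < a / (1 + b) := div_pos ha hb1
    linarith
  have h1 : (1 + a) ^ ρ < (1 + a / ρ) ^ ρ := by
    apply Real.rpow_lt_rpow (by linarith) _ hρ0
    have : a < a / ρ := by
      rw [lt_div_iff₀ hρ0]
      nlinarith
    linarith
  have h2 : K ≤ (1 + a) ^ ρ := by
    have hK' : K ≤ Real.sqrt (1 + a) := by
      rw [show K ^ 2 = K * K by ring] at hK2
      calc K = Real.sqrt (K * K) := (Real.sqrt_mul_self hKpos).symm
        _ ≤ Real.sqrt (1 + a) := Real.sqrt_le_sqrt hK2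
    calc K ≤ Real.sqrt (1 + a) := hK'
      _ = (1 + a) ^ (1/2 : ℝ) := Real.sqrt_eq_rpow _
      _ ≤ (1 + a) ^ ρ := Real.rpow_le_rpow_of_exponent_le ha1 h
  linarith [heq ▸ h1, hK, h2]

/-- If `SNR₁` and `SNR₂` increase jointly with fixed ratio `z = SNR₁/SNR₂`, then
for all sufficiently large `SNR₁` an FDM Nash bargaining solution exists:
there is a constant `g` such that for all `S₁ > g`,
`f(S₁, α·(S₁/z)) + f(S₁/z, β·S₁) < 1`. -/
theorem nbs_exists_high_snr_fixed_ratio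
    (f : ℝ → ℝ → ℝ)
    (hf : ∀ a b : ℝ, 0 < a → 0 < b →
      f a b ∈ Set.Ioo (0 : ℝ) 1 ∧ (1 + a / f a b) ^ (f a b) = 1 + a / (1 + b))
    (α β z : ℝ) (hα : 0 < α) (hβ : 0 < β) (hz : 0 < z) :
    ∃ g : ℝ, ∀ S₁ : ℝ, g < S₁ →
      f S₁ (α * (S₁ / z)) + f (S₁ / z) (β * S₁) < 1 := by
  set K₁ : ℝ := 1 + z / α with hK₁def
  set K₂ : ℝ := 1 + 1 / (z * β) with hK₂def
  refine ⟨max 1 (max (K₁ ^ 2 - 1) (z * (K₂ ^ 2 - 1))), fun S₁ hS₁ => ?_⟩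
  have h1S : (1:ℝ) < S₁ := lt_of_le_of_lt (le_max_left _ _) hS₁
  have hS₁pos : 0 < S₁ := by linarith
  have hSz : 0 < S₁ / z := div_pos hS₁pos hz
  have hb₁ : 0 < α * (S₁ / z) := mul_pos hα hSz
  have hb₂ : 0 < β * S₁ := mul_pos hβ hS₁pos
  obtain ⟨⟨hρ₁0, hρ₁1⟩, heq₁⟩ := hf S₁ (α * (S₁ / z)) hS₁pos hb₁
  obtain ⟨⟨hρ₂0, hρ₂1⟩, heq₂⟩ := hf (S₁ / z) (β * S₁) hSz hb₂
  have hg1 : K₁ ^ 2 - 1 < S₁ := lt_of_le_of_lt (le_trans (le_max_left _ _) (le_max_right _ _)) hS₁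
  have hg2 : z * (K₂ ^ 2 - 1) < S₁ := lt_of_le_of_lt (le_trans (le_max_right _ _) (le_max_right _ _)) hS₁
  have hr1 : f S₁ (α * (S₁ / z)) < 1 / 2 := by
    apply aux_rho_lt_half S₁ (α * (S₁ / z)) K₁ _ hS₁pos hb₁ hρ₁0 hρ₁1 heq₁
    · -- 1 + S₁ / (1 + α * (S₁/z)) ≤ K₁
      rw [hK₁def]
      have hden : (0:ℝ) < 1 + α * (S₁ / z) := by linarith
      have : S₁ / (1 + α * (S₁ / z)) ≤ z / α := by
        rw [div_le_div_iff₀ hden hα]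
        have : α * (S₁ / z) * z = α * S₁ := by field_simp
        nlinarith
      linarith
    · linarith
  have hr2 : f (S₁ / z) (β * S₁) < 1 / 2 := by
    apply aux_rho_lt_half (S₁ / z) (β * S₁) K₂ _ hSz hb₂ hρ₂0 hρ₂1 heq₂
    · rw [hK₂def]
      have hden : (0:ℝ) < 1 + β * S₁ := by linarith
      have hzβ : (0:ℝ) < z * β := mul_pos hz hβ
      have : (S₁ / z) / (1 + β * S₁) ≤ 1 / (z * β) := by
        rw [div_le_div_iff₀ hden hzβ]
        have : S₁ / z * (z * β) = S₁ * β := by field_simp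
        nlinarith [this]
      linarith
    · have : (K₂ ^ 2 - 1) < S₁ / z := by
        rw [lt_div_iff₀ hz]; nlinarith
      linarith
  linarith
end

section
/- Fix z > 0. For every x > log(1+z) there is a unique ρ = h(x,z) > 0 satisfying (1 + x/ρ)^ρ = 1 + z; moreover, the function x ↦ h(x,z) is strictly decreasing on (log(1+z), ∞) and h(x,z) → 0 as x → ∞. -/
open Filter Real

lemma log_gt (t : ℝ) (ht : 0 < t) : t / (1 + t) < Real.log (1 + t) := by
  have h1 : (0:ℝ) < 1 + t := by linarith
  have h2 : (1+t)⁻¹ ≠ 1 := by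
    intro hc
    have : (1+t) = 1 := by field_simp at hc; linarith
    linarith
  have := Real.log_lt_sub_one_of_pos (inv_pos.2 h1) h2
  rw [Real.log_inv] at this
  have : 1 - (1+t)⁻¹ < Real.log (1+t) := by linarith
  have he : t / (1+t) = 1 - (1+t)⁻¹ := by field_simp; ring
  linarith [he ▸ this]

lemma gderiv (x ρ : ℝ) (hx : 0 < x) (hρ : 0 < ρ) :
    HasDerivAt (fun r => r * Real.log (1 + x / r))
      (1 * Real.log (1 + x / ρ) + ρ * ((x * -(ρ^2)⁻¹) / (1 + x / ρ))) ρ := by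
  have hpos : 0 < 1 + x / ρ := by positivity
  have hinv : HasDerivAt (fun r : ℝ => 1 + x / r) (x * -(ρ^2)⁻¹) ρ := by
    simpa [div_eq_mul_inv] using (((hasDerivAt_inv hρ.ne').const_mul x).const_add 1)
  exact (hasDerivAt_id ρ).mul (hinv.log hpos.ne')

lemma gmono (x : ℝ) (hx : 0 < x) :
    StrictMonoOn (fun r => r * Real.log (1 + x / r)) (Set.Ioi 0) := by
  apply strictMonoOn_of_deriv_pos (convex_Ioi 0)
  · apply ContinuousOn.mul continuousOn_id
    apply ContinuousOn.log
    · exact continuousOn_const.add (continuousOn_const.div continuousOn_id (fun r hr => (ne_of_gt hr)))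
    · intro r hr
      have : (0:ℝ) < r := hr
      positivity
  · intro ρ hρ
    rw [interior_Ioi] at hρ
    have hρ : (0:ℝ) < ρ := hρ
    rw [(gderiv x ρ hx hρ).deriv]
    have ht : 0 < x / ρ := by positivity
    have key := log_gt (x/ρ) ht
    have hpos : 0 < 1 + x / ρ := by positivity
    have : ρ * ((x * -(ρ^2)⁻¹) / (1 + x / ρ)) = -((x/ρ) / (1 + x/ρ)) := by
      field_simp
    rw [this]
    linarith

/-- For fixed `z > 0` and every `x > log(1+z)` there is a unique `ρ > 0` with
`(1 + x/ρ)^ρ = 1 + z`; the resulting function `x ↦ h(x,z)` is strictly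
decreasing on `(log(1+z), ∞)` and tends to `0` as `x → ∞`. -/
theorem h_exists_unique_strictAnti_tendsto_zero
    (z : ℝ) (hz : 0 < z) (h : ℝ → ℝ)
    (hh : ∀ x : ℝ, Real.log (1 + z) < x →
      0 < h x ∧ (1 + x / h x) ^ (h x) = 1 + z) :
    (∀ x : ℝ, Real.log (1 + z) < x →
      ∃! ρ : ℝ, 0 < ρ ∧ (1 + x / ρ) ^ ρ = 1 + z) ∧
    StrictAntiOn h (Set.Ioi (Real.log (1 + z))) ∧
    Tendsto h atTop (nhds 0) := by
  set L := Real.log (1 + z) with hL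
  have hLpos : 0 < L := Real.log_pos (by linarith)
  -- any solution satisfies the log equation
  have hlog : ∀ x ρ : ℝ, 0 < x → 0 < ρ → (1 + x / ρ) ^ ρ = 1 + z →
      ρ * Real.log (1 + x / ρ) = L := by
    intro x ρ hx hρ heq
    have hpos : 0 < 1 + x / ρ := by positivity
    have := congrArg Real.log heq
    rwa [Real.log_rpow hpos] at this
  have huniq : ∀ x : ℝ, L < x → ∀ ρ : ℝ, 0 < ρ ∧ (1 + x / ρ) ^ ρ = 1 + z → ρ = h x := by
    intro x hx ρ ⟨hρ, heq⟩
    have hx0 : 0 < x := lt_trans hLpos hx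
    obtain ⟨hhx, hheq⟩ := hh x hx
    have e1 := hlog x ρ hx0 hρ heq
    have e2 := hlog x (h x) hx0 hhx hheq
    exact (gmono x hx0).injOn hρ hhx (by rw [e1, e2])
  refine ⟨?_, ?_, ?_⟩
  · intro x hx
    exact ⟨h x, hh x hx, fun ρ hρ => by rw [huniq x hx ρ hρ, huniq x hx (h x) (hh x hx)]⟩
  · intro x1 hx1 x2 hx2 hlt
    obtain ⟨h1, e1⟩ := hh x1 hx1
    obtain ⟨h2, e2⟩ := hh x2 hx2
    have hx10 : 0 < x1 := lt_trans hLpos hx1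
    have hx20 : 0 < x2 := lt_trans hLpos hx2
    have E1 := hlog x1 (h x1) hx10 h1 e1
    have E2 := hlog x2 (h x2) hx20 h2 e2
    by_contra hc
    push_neg at hc
    -- h x1 ≤ h x2
    have mono := ((gmono x2 hx20).monotoneOn) (Set.mem_Ioi.2 h1) (Set.mem_Ioi.2 h2) hc
    -- g_{x2}(h x1) > g_{x1}(h x1)
    have hstep : h x1 * Real.log (1 + x1 / h x1) < h x1 * Real.log (1 + x2 / h x1) := by
      apply mul_lt_mul_of_pos_left _ h1
      apply Real.log_lt_log (by positivity)
      gcongr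
    simp only at mono
    linarith [E1, E2, mono, hstep]
  · rw [tendsto_order]
    constructor
    · intro a ha
      filter_upwards [eventually_gt_atTop L] with x hx
      exact lt_trans ha (hh x hx).1
    · intro ε hε
      filter_upwards [eventually_gt_atTop (max L (ε * (Real.exp (L / ε) - 1)))] with x hx
      rw [max_lt_iff] at hx
      obtain ⟨hxL, hxε⟩ := hx
      obtain ⟨hpos, heq⟩ := hh x hxL
      have hx0 : 0 < x := lt_trans hLpos hxL
      have E := hlog x (h x) hx0 hpos heq
      by_contra hc
      push_neg at hc
      -- ε ≤ h x, so L = g(h x) ≥ g(ε) > L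
      have mono := ((gmono x hx0).monotoneOn) (Set.mem_Ioi.2 hε) (Set.mem_Ioi.2 hpos) hc
      simp only at mono
      have hgε : L < ε * Real.log (1 + x / ε) := by
        have h1 : Real.exp (L / ε) < 1 + x / ε := by
          have h2 : Real.exp (L / ε) - 1 < x / ε :=
            (lt_div_iff₀ hε).2 (by linarith [mul_comm ε (Real.exp (L / ε) - 1)])
          linarith
        have := Real.log_lt_log (Real.exp_pos _) h1
        rw [Real.log_exp] at this
        calc L = ε * (L / ε) := by field_simp
        _ < ε * Real.log (1 + x / ε) := by exact mul_lt_mul_of_pos_left this hε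
      linarith
end

section
/- Let x, y > 0 with x > log(1 + x/y). Then f(x, y) < h(x, x/y). -/
lemma pow_fun_strict_mono {x a b : ℝ} (hx : 0 < x) (ha : 0 < a) (hab : a < b) :
    (1 + x / a) ^ a < (1 + x / b) ^ b := by
  have hb : 0 < b := ha.trans hab
  have hs : (0:ℝ) < x / b := div_pos hx hb
  have hp : 1 < b / a := (one_lt_div ha).2 hab
  have hbern := one_add_mul_self_lt_rpow_one_add (by linarith : (-1:ℝ) ≤ x / b)
    (ne_of_gt hs) hp
  have heq : b / a * (x / b) = x / a := by
    field_simp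
  rw [heq] at hbern
  have h1 : (0:ℝ) ≤ 1 + x / a := by positivity
  have := Real.rpow_lt_rpow h1 hbern ha
  rwa [← Real.rpow_mul (by positivity),
    div_mul_cancel₀ _ (ne_of_gt ha)] at this

/-- For `x, y > 0` with `x > log(1 + x/y)` one has `f(x,y) < h(x, x/y)`, where
`f(x,y)` is the unique `ρ ∈ (0,1)` with `(1 + x/ρ)^ρ = 1 + x/(1+y)` and
`h(x,z)` is the unique `ρ > 0` with `(1 + x/ρ)^ρ = 1 + z`. -/
theorem f_lt_h
    (f : ℝ → ℝ → ℝ)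
    (hf : ∀ a b : ℝ, 0 < a → 0 < b →
      f a b ∈ Set.Ioo (0 : ℝ) 1 ∧ (1 + a / f a b) ^ (f a b) = 1 + a / (1 + b))
    (h : ℝ → ℝ → ℝ)
    (hh : ∀ a z : ℝ, 0 < z → Real.log (1 + z) < a →
      0 < h a z ∧ (1 + a / h a z) ^ (h a z) = 1 + z)
    (x y : ℝ) (hx : 0 < x) (hy : 0 < y)
    (hxy : Real.log (1 + x / y) < x) :
    f x y < h x (x / y) := by
  obtain ⟨⟨hf0, hf1⟩, hfeq⟩ := hf x y hx hy
  obtain ⟨hh0, hheq⟩ := hh x (x / y) (div_pos hx hy) hxy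
  have hlt : x / (1 + y) < x / y := by
    apply div_lt_div_of_pos_left hx hy; linarith
  by_contra hle
  push_neg at hle
  rcases lt_or_eq_of_le hle with hlt' | heq
  · have := pow_fun_strict_mono hx hh0 hlt'
    rw [hheq, hfeq] at this
    linarith
  · rw [← heq, hheq] at hfeq
    linarith
end

section
/- Let α, β > 0 and S₁, S₂ > 0 satisfy S₁ + S₂ ≤ (1 − α − β)/(αβ). Then 1 + S₁ + S₂ ≤ (1 + S₁/(1 + α·S₂)) · (1 + S₂/(1 + β·S₁)). -/
/-- If `S₁ + S₂ ≤ (1 − α − β)/(αβ)` then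
`1 + S₁ + S₂ ≤ (1 + S₁/(1 + αS₂)) · (1 + S₂/(1 + βS₁))`. -/
theorem no_nbs_product_inequality
    (α β S₁ S₂ : ℝ) (hα : 0 < α) (hβ : 0 < β) (h1 : 0 < S₁) (h2 : 0 < S₂)
    (hsum : S₁ + S₂ ≤ (1 - α - β) / (α * β)) :
    1 + S₁ + S₂ ≤ (1 + S₁ / (1 + α * S₂)) * (1 + S₂ / (1 + β * S₁)) := by
  have hab : 0 < α * β := mul_pos hα hβ
  have hsum' : α * β * (S₁ + S₂) ≤ 1 - α - β := by
    rw [div_eq_mul_inv] at hsum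
    calc α * β * (S₁ + S₂) ≤ α * β * ((1 - α - β) * (α * β)⁻¹) := by
          exact mul_le_mul_of_nonneg_left hsum hab.le
      _ = 1 - α - β := by field_simp
  have d1 : 0 < 1 + α * S₂ := by nlinarith
  have d2 : 0 < 1 + β * S₁ := by nlinarith
  rw [add_comm (1:ℝ) (S₁ / _), add_comm (1:ℝ) (S₂ / _), div_add_one d1.ne', div_add_one d2.ne', div_mul_div_comm, le_div_iff₀ (mul_pos d1 d2)]
  nlinarith [mul_pos h1 h2, mul_pos hα h2, mul_pos hβ h1, sq_nonneg (S₁ - S₂), mul_pos (mul_pos h1 h2) hab, sq_nonneg (α*S₂ - β*S₁)]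
end

section
/- Let α, β > 0 and S₁, S₂ > 0 satisfy S₁ + S₂ ≤ (1 − α − β)/(αβ). Then there is no FDM Nash bargaining solution: for every ρ ∈ (0, 1), it is not the case that both ρ·log(1 + S₁/ρ) > log(1 + S₁/(1 + α·S₂)) and (1−ρ)·log(1 + S₂/(1−ρ)) > log(1 + S₂/(1 + β·S₁)). -/
/-- If `S₁ + S₂ ≤ (1 − α − β)/(αβ)` then no FDM Nash bargaining solution
exists: no split `(ρ, 1−ρ)` gives both players strictly more than their
competitive rates. -/
theorem no_fdm_nbs
    (α β S₁ S₂ : ℝ) (hα : 0 < α) (hβ : 0 < β) (h1 : 0 < S₁) (h2 : 0 < S₂)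
    (hsum : S₁ + S₂ ≤ (1 - α - β) / (α * β)) :
    ∀ ρ ∈ Set.Ioo (0 : ℝ) 1,
      ¬(Real.log (1 + S₁ / (1 + α * S₂)) < ρ * Real.log (1 + S₁ / ρ) ∧
        Real.log (1 + S₂ / (1 + β * S₁)) < (1 - ρ) * Real.log (1 + S₂ / (1 - ρ))) := by
  rintro ρ ⟨hρ0, hρ1⟩ ⟨hA, hB⟩
  have hσ0 : 0 < 1 - ρ := by linarith
  have hx : (0:ℝ) < 1 + α * S₂ := by positivity
  have hy : (0:ℝ) < 1 + β * S₁ := by positivity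
  -- rewrite the competitive rates
  have e1 : 1 + S₁ / (1 + α * S₂) = (1 + α * S₂ + S₁) / (1 + α * S₂) := by
    field_simp
  have e2 : 1 + S₂ / (1 + β * S₁) = (1 + β * S₁ + S₂) / (1 + β * S₁) := by
    field_simp
  -- Jensen's inequality for log
  have hmem1 : (1 + S₁ / ρ) ∈ Set.Ioi (0:ℝ) := by
    have : 0 < S₁ / ρ := div_pos h1 hρ0
    simp only [Set.mem_Ioi]; linarith
  have hmem2 : (1 + S₂ / (1 - ρ)) ∈ Set.Ioi (0:ℝ) := by
    have : 0 < S₂ / (1 - ρ) := div_pos h2 hσ0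
    simp only [Set.mem_Ioi]; linarith
  have jensen := strictConcaveOn_log_Ioi.concaveOn.2 hmem1 hmem2
    (le_of_lt hρ0) (le_of_lt hσ0) (by ring)
  have hcomb : ρ • (1 + S₁ / ρ) + (1 - ρ) • (1 + S₂ / (1 - ρ)) = 1 + S₁ + S₂ := by
    simp only [smul_eq_mul]
    field_simp
    ring
  rw [hcomb] at jensen
  simp only [smul_eq_mul] at jensen
  -- the key algebraic inequality
  have hsum' : α * β * (S₁ + S₂) ≤ 1 - α - β := by
    have := (le_div_iff₀ (by positivity : (0:ℝ) < α * β)).mp hsum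
    linarith
  have key : (1 + S₁ + S₂) * ((1 + α * S₂) * (1 + β * S₁)) ≤
      (1 + α * S₂ + S₁) * (1 + β * S₁ + S₂) := by
    nlinarith [mul_le_mul_of_nonneg_left hsum' (le_of_lt (mul_pos h1 h2)),
      mul_pos h1 h2, mul_pos hα hβ]
  -- take logs
  have hp : (0:ℝ) < 1 + S₁ + S₂ := by linarith
  have hlog := Real.log_le_log (by positivity) key
  rw [Real.log_mul (ne_of_gt hp) (ne_of_gt (mul_pos hx hy)),
      Real.log_mul (ne_of_gt hx) (ne_of_gt hy),
      Real.log_mul (ne_of_gt (by linarith : (0:ℝ) < 1 + α * S₂ + S₁))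
        (ne_of_gt (by linarith : (0:ℝ) < 1 + β * S₁ + S₂))] at hlog
  rw [e1] at hA
  rw [e2] at hB
  rw [Real.log_div (ne_of_gt (by linarith : (0:ℝ) < 1 + α * S₂ + S₁)) (ne_of_gt hx)] at hA
  rw [Real.log_div (ne_of_gt (by linarith : (0:ℝ) < 1 + β * S₁ + S₂)) (ne_of_gt hy)] at hB
  linarith
end

section
/- In the joint FDM/TDM game, let α* be a feasible time-sharing matrix maximizing the Nash product Π_{i=1}^N (R_i(α_i) − R_{iC}) over all feasible α with strictly positive surpluses, and assume s_i(α*) = R_i(α*_i) − R_{iC} > 0 for every i. Then for every pair of distinct players i ≠ j and every frequency bin k with α*_i(k) > 0 and α*_j(k) > 0, one has R_i(k) · s_j(α*) = R_j(k) · s_i(α*), i.e., R_i(k)/s_i(α*) = R_j(k)/s_j(α*). -/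
/-- One-sided version: transferring time-share at bin `k` from `j` (who uses it)
to `i` must not increase the Nash product, which forces
`R i k * s j ≤ R j k * s i`. -/
lemma nbs_sharing_ratio_le
    (N K : ℕ) (R : Fin N → Fin K → ℝ) (hR : ∀ i k, 0 < R i k)
    (RC : Fin N → ℝ)
    (α : Fin N → Fin K → ℝ)
    (hα : ∀ i k, 0 ≤ α i k) (hαsum : ∀ k, ∑ i, α i k = 1)
    (hs : ∀ i, 0 < (∑ k, α i k * R i k) - RC i)
    (hmax : ∀ β : Fin N → Fin K → ℝ, (∀ i k, 0 ≤ β i k) → (∀ k, ∑ i, β i k = 1) →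
      (∀ i, 0 < (∑ k, β i k * R i k) - RC i) →
      (∏ i, ((∑ k, β i k * R i k) - RC i)) ≤ ∏ i, ((∑ k, α i k * R i k) - RC i))
    (i j : Fin N) (hij : i ≠ j) (k : Fin K) (hjk : 0 < α j k) :
    R i k * ((∑ m, α j m * R j m) - RC j) ≤ R j k * ((∑ m, α i m * R i m) - RC i) := by
  by_contra hlt
  push_neg at hlt
  set si := (∑ m, α i m * R i m) - RC i with hsi
  set sj := (∑ m, α j m * R j m) - RC j with hsj
  have hsi0 : 0 < si := hs i
  have hsj0 : 0 < sj := hs j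
  have hRik : 0 < R i k := hR i k
  have hRjk : 0 < R j k := hR j k
  set D := R i k * sj - R j k * si with hD
  have hD0 : 0 < D := by dsimp [D]; linarith
  set ε := min (α j k) (min (sj / (2 * R j k)) (D / (2 * (R i k * R j k)))) with hε
  have hε0 : 0 < ε := lt_min hjk (lt_min (by positivity) (by positivity))
  have hεα : ε ≤ α j k := min_le_left _ _
  have hε1 : ε * R j k ≤ sj / 2 := by
    have h1 : ε ≤ sj / (2 * R j k) := le_trans (min_le_right _ _) (min_le_left _ _)
    rw [le_div_iff₀ (by positivity)] at h1
    linarith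
  have hε2 : ε * (R i k * R j k) ≤ D / 2 := by
    have h1 : ε ≤ D / (2 * (R i k * R j k)) := le_trans (min_le_right _ _) (min_le_right _ _)
    rw [le_div_iff₀ (by positivity)] at h1
    linarith
  -- perturbed point
  set β : Fin N → Fin K → ℝ := fun p q =>
    α p q + (if p = i ∧ q = k then ε else 0) - (if p = j ∧ q = k then ε else 0) with hβ
  have hβnn : ∀ p q, 0 ≤ β p q := by
    intro p q
    dsimp [β]
    by_cases h1 : p = i ∧ q = k
    · have h2 : ¬(p = j ∧ q = k) := fun h => hij (h1.1.symm.trans h.1)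
      rw [if_pos h1, if_neg h2]
      linarith [hα p q, hε0]
    · by_cases h2 : p = j ∧ q = k
      · rw [if_neg h1, if_pos h2]
        have : q = k := h2.2
        have hpq : α p q = α j k := by rw [h2.1, h2.2]
        linarith [hεα, hpq]
      · rw [if_neg h1, if_neg h2]
        linarith [hα p q]
  have hβsum : ∀ q, ∑ p, β p q = 1 := by
    intro q
    dsimp [β]
    rw [Finset.sum_sub_distrib, Finset.sum_add_distrib]
    by_cases hqk : q = k
    · subst hqk
      simp [hαsum q, Finset.sum_ite_eq']
    · simp [hαsum q, hqk]
  -- row sums of β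
  have hrow : ∀ p, p ≠ i → p ≠ j → β p = α p := by
    intro p hpi hpj
    funext q
    simp [β, hpi, hpj]
  have hβi : (∑ q, β i q * R i q) = (∑ q, α i q * R i q) + ε * R i k := by
    dsimp [β]
    simp only [hij, true_and, false_and, if_false]
    rw [show (∑ q, (α i q + (if q = k then ε else 0) - 0) * R i q)
        = ∑ q, (α i q * R i q + (if q = k then ε * R i q else 0)) by
      apply Finset.sum_congr rfl; intro q _; by_cases hq : q = k <;> simp [hq] <;> ring]
    rw [Finset.sum_add_distrib, Finset.sum_ite_eq' Finset.univ k]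
    simp
  have hβj : (∑ q, β j q * R j q) = (∑ q, α j q * R j q) - ε * R j k := by
    dsimp [β]
    simp only [hij.symm, false_and, if_false, true_and]
    rw [show (∑ q, (α j q + 0 - (if q = k then ε else 0)) * R j q)
        = ∑ q, (α j q * R j q - (if q = k then ε * R j q else 0)) by
      apply Finset.sum_congr rfl; intro q _; by_cases hq : q = k <;> simp [hq] <;> ring]
    rw [Finset.sum_sub_distrib, Finset.sum_ite_eq' Finset.univ k]
    simp
  -- surpluses at β
  have hti : (∑ q, β i q * R i q) - RC i = si + ε * R i k := by rw [hβi]; dsimp [si]; ring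
  have htj : (∑ q, β j q * R j q) - RC j = sj - ε * R j k := by rw [hβj]; dsimp [sj]; ring
  have htm : ∀ p, p ≠ i → p ≠ j → (∑ q, β p q * R p q) - RC p = (∑ q, α p q * R p q) - RC p := by
    intro p hpi hpj; rw [hrow p hpi hpj]
  have hβpos : ∀ p, 0 < (∑ q, β p q * R p q) - RC p := by
    intro p
    by_cases hpi : p = i
    · subst hpi; rw [hti]; positivity
    · by_cases hpj : p = j
      · subst hpj; rw [htj]; linarith
      · rw [htm p hpi hpj]; exact hs p
  -- product strictly increases
  have hsplit : ∀ f : Fin N → ℝ,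
      (∏ m, f m) = f i * (f j * ∏ m ∈ (Finset.univ.erase i).erase j, f m) := by
    intro f
    rw [← Finset.mul_prod_erase _ _ (Finset.mem_univ i),
      ← Finset.mul_prod_erase _ _ (Finset.mem_erase.mpr ⟨hij.symm, Finset.mem_univ j⟩)]
  have hrest_eq : (∏ m ∈ (Finset.univ.erase i).erase j, ((∑ q, β m q * R m q) - RC m))
      = ∏ m ∈ (Finset.univ.erase i).erase j, ((∑ q, α m q * R m q) - RC m) := by
    apply Finset.prod_congr rfl
    intro m hm
    simp only [Finset.mem_erase, Finset.mem_univ] at hm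
    exact htm m hm.2.1 hm.1
  have hrest_pos : 0 < ∏ m ∈ (Finset.univ.erase i).erase j, ((∑ q, α m q * R m q) - RC m) :=
    Finset.prod_pos fun m _ => hs m
  have hpair : si * sj < (si + ε * R i k) * (sj - ε * R j k) := by
    have h3 : ε * (ε * (R i k * R j k)) ≤ ε * (D / 2) :=
      mul_le_mul_of_nonneg_left hε2 hε0.le
    have h4 : ε * D ≤ ε * D := le_refl _
    have hεD : 0 < ε * D := mul_pos hε0 hD0
    nlinarith [hεD, h3]
  have hgt : (∏ m, ((∑ q, α m q * R m q) - RC m)) < ∏ m, ((∑ q, β m q * R m q) - RC m) := by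
    rw [hsplit (fun m => (∑ q, β m q * R m q) - RC m),
        hsplit (fun m => (∑ q, α m q * R m q) - RC m)]
    simp only [hrest_eq, hti, htj]
    rw [← mul_assoc, ← mul_assoc]
    apply mul_lt_mul_of_pos_right _ hrest_pos
    calc si * sj < (si + ε * R i k) * (sj - ε * R j k) := hpair
      _ = _ := by ring
  exact absurd (hmax β hβnn hβsum hβpos) (not_le.mpr hgt)

/-- KKT / equalization property of the Nash bargaining solution of the joint
FDM/TDM game: at a maximizer `α` of the Nash product with strictly positive
surpluses, any two players sharing a frequency bin `k` satisfy
`R_i(k)/s_i = R_j(k)/s_j` (stated in cross-multiplied form). -/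
theorem nbs_sharing_ratio_equal
    (N K : ℕ) (R : Fin N → Fin K → ℝ) (hR : ∀ i k, 0 < R i k)
    (RC : Fin N → ℝ)
    (α : Fin N → Fin K → ℝ)
    (hα : ∀ i k, 0 ≤ α i k) (hαsum : ∀ k, ∑ i, α i k = 1)
    (hs : ∀ i, 0 < (∑ k, α i k * R i k) - RC i)
    (hmax : ∀ β : Fin N → Fin K → ℝ, (∀ i k, 0 ≤ β i k) → (∀ k, ∑ i, β i k = 1) →
      (∀ i, 0 < (∑ k, β i k * R i k) - RC i) →
      (∏ i, ((∑ k, β i k * R i k) - RC i)) ≤ ∏ i, ((∑ k, α i k * R i k) - RC i)) :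
    ∀ i j : Fin N, i ≠ j → ∀ k : Fin K, 0 < α i k → 0 < α j k →
      R i k * ((∑ m, α j m * R j m) - RC j) = R j k * ((∑ m, α i m * R i m) - RC i) := by
  intro i j hij k hik hjk
  exact le_antisymm
    (nbs_sharing_ratio_le N K R hR RC α hα hαsum hs hmax i j hij k hjk)
    (nbs_sharing_ratio_le N K R hR RC α hα hαsum hs hmax j i hij.symm k hik)
end

section
/- In the joint FDM/TDM game, assume that for every pair of distinct players i ≠ j the K values L_{ij}(k) = R_i(k)/R_j(k), k = 1,…,K, are pairwise distinct. Let α* be a feasible time-sharing matrix maximizing the Nash product over all feasible α with strictly positive surpluses, with s_i(α*) > 0 for every i. Then for each pair i ≠ j there is at most one frequency bin k with α*_i(k) > 0 and α*_j(k) > 0; consequently, the number of frequency bins shared by two or more players, |{ k : ∃ i ≠ j with α*_i(k) > 0 and α*_j(k) > 0 }|, is at most N(N−1)/2 = C(N,2). -/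
open scoped Classical

/-- Key exchange lemma: at a maximizer, two players cannot share two bins when
the exchange coefficient is strictly positive. -/
lemma nbs_no_two_shared_aux
    (N K : ℕ) (R : Fin N → Fin K → ℝ) (hR : ∀ i k, 0 < R i k)
    (RC : Fin N → ℝ)
    (α : Fin N → Fin K → ℝ)
    (hα : ∀ i k, 0 ≤ α i k) (hαsum : ∀ k, ∑ i, α i k = 1)
    (hs : ∀ i, 0 < (∑ k, α i k * R i k) - RC i)
    (hmax : ∀ β : Fin N → Fin K → ℝ, (∀ i k, 0 ≤ β i k) → (∀ k, ∑ i, β i k = 1) →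
      (∀ i, 0 < (∑ k, β i k * R i k) - RC i) →
      (∏ i, ((∑ k, β i k * R i k) - RC i)) ≤ ∏ i, ((∑ k, α i k * R i k) - RC i))
    (i j : Fin N) (hij : i ≠ j) (k k' : Fin K) (hkk' : k ≠ k')
    (h2 : 0 < α j k) (h3 : 0 < α i k')
    (hc : 0 < R j k' * R i k - R j k * R i k') : False := by
  set t : ℝ := min (α j k / R j k') (α i k' / R j k) with ht_def
  have ht : 0 < t := lt_min (div_pos h2 (hR j k')) (div_pos h3 (hR j k))
  have ht1 : t * R j k' ≤ α j k := by
    rw [← div_mul_cancel₀ (α j k) (hR j k').ne']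
    exact mul_le_mul_of_nonneg_right (min_le_left _ _) (hR j k').le
  have ht2 : t * R j k ≤ α i k' := by
    rw [← div_mul_cancel₀ (α i k') (hR j k).ne']
    exact mul_le_mul_of_nonneg_right (min_le_right _ _) (hR j k).le
  set e : Fin K → ℝ := fun l => if l = k then R j k' else if l = k' then -(R j k) else 0
    with he_def
  set β : Fin N → Fin K → ℝ :=
    fun m l => α m l + t * (if m = i then e l else if m = j then -(e l) else 0) with hβ_def
  have hβi : ∀ l, β i l = α i l + t * e l := by
    intro l; simp [hβ_def]
  have hβj : ∀ l, β j l = α j l - t * e l := by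
    intro l; simp [hβ_def, Ne.symm hij]; ring
  have hβo : ∀ m, m ≠ i → m ≠ j → ∀ l, β m l = α m l := by
    intro m hmi hmj l; simp [hβ_def, hmi, hmj]
  have hek : e k = R j k' := by simp [he_def]
  have hek' : e k' = -(R j k) := by
    simp [he_def, Ne.symm hkk']
  have heo : ∀ l, l ≠ k → l ≠ k' → e l = 0 := by
    intro l h h'; simp [he_def, h, h']
  -- sum of e l * R m l over bins
  have hsum_e : ∀ m : Fin N, ∑ l, e l * R m l = R j k' * R m k - R j k * R m k' := by
    intro m
    have step : ∀ l, e l * R m l =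
        (if l = k then R j k' * R m l else 0) + (if l = k' then -(R j k) * R m l else 0) := by
      intro l
      by_cases h : l = k
      · subst h; rw [hek, if_pos rfl, if_neg hkk']; ring
      · by_cases h' : l = k'
        · subst h'; rw [hek', if_neg h, if_pos rfl]; ring
        · rw [heo l h h', if_neg h, if_neg h']; ring
    rw [Finset.sum_congr rfl (fun l _ => step l), Finset.sum_add_distrib,
      Finset.sum_ite_eq' Finset.univ k (fun l => R j k' * R m l),
      Finset.sum_ite_eq' Finset.univ k' (fun l => -(R j k) * R m l)]
    simp only [Finset.mem_univ, if_pos]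
    ring
  -- β rates
  have hrate_i : ∑ l, β i l * R i l =
      (∑ l, α i l * R i l) + t * (R j k' * R i k - R j k * R i k') := by
    have : ∀ l, β i l * R i l = α i l * R i l + t * (e l * R i l) := by
      intro l; rw [hβi l]; ring
    rw [Finset.sum_congr rfl (fun l _ => this l), Finset.sum_add_distrib,
      ← Finset.mul_sum, hsum_e]
  have hrate_j : ∑ l, β j l * R j l = ∑ l, α j l * R j l := by
    have : ∀ l, β j l * R j l = α j l * R j l - t * (e l * R j l) := by
      intro l; rw [hβj l]; ring
    rw [Finset.sum_congr rfl (fun l _ => this l), Finset.sum_sub_distrib,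
      ← Finset.mul_sum, hsum_e]
    ring
  have hrate_o : ∀ m, m ≠ i → m ≠ j → ∑ l, β m l * R m l = ∑ l, α m l * R m l := by
    intro m hmi hmj
    exact Finset.sum_congr rfl (fun l _ => by rw [hβo m hmi hmj l])
  -- β nonneg
  have hβnn : ∀ m l, 0 ≤ β m l := by
    intro m l
    by_cases hmi : m = i
    · rw [hmi, hβi l]
      by_cases hlk : l = k
      · rw [hlk, hek]
        have := mul_pos ht (hR j k')
        nlinarith [hα i k]
      · by_cases hlk' : l = k'
        · rw [hlk', hek']
          nlinarith
        · rw [heo l hlk hlk']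
          simpa using hα i l
    · by_cases hmj : m = j
      · rw [hmj, hβj l]
        by_cases hlk : l = k
        · rw [hlk, hek]
          nlinarith
        · by_cases hlk' : l = k'
          · rw [hlk', hek']
            have := mul_pos ht (hR j k)
            nlinarith [hα j k']
          · rw [heo l hlk hlk']
            simpa using hα j l
      · rw [hβo m hmi hmj l]; exact hα m l
  -- β column sums
  have hβsum : ∀ l, ∑ m, β m l = 1 := by
    intro l
    simp only [hβ_def]
    rw [Finset.sum_add_distrib, hαsum l, ← Finset.mul_sum]
    have step : ∀ m : Fin N, (if m = i then e l else if m = j then -(e l) else 0) =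
        (if m = i then e l else 0) + (if m = j then -(e l) else 0) := by
      intro m
      by_cases hmi : m = i
      · have hmj : m ≠ j := by rw [hmi]; exact hij
        simp [hmi, hmj]
        exact fun h => absurd h hij
      · by_cases hmj : m = j
        · simp [hmi, hmj, Ne.symm hij]
        · simp [hmi, hmj]
    rw [Finset.sum_congr rfl (fun m _ => step m), Finset.sum_add_distrib,
      Finset.sum_ite_eq' Finset.univ i (fun _ => e l),
      Finset.sum_ite_eq' Finset.univ j (fun _ => -(e l))]
    simp only [Finset.mem_univ, if_pos]
    ring
  -- β surpluses
  have hsm : ∀ m, m ≠ i → (∑ l, β m l * R m l) - RC m = (∑ l, α m l * R m l) - RC m := by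
    intro m hmi
    by_cases hmj : m = j
    · rw [hmj, hrate_j]
    · rw [hrate_o m hmi hmj]
  have hβs : ∀ m, 0 < (∑ l, β m l * R m l) - RC m := by
    intro m
    by_cases hmi : m = i
    · rw [hmi, hrate_i]; nlinarith [hs i, mul_pos ht hc]
    · rw [hsm m hmi]; exact hs m
  -- strict increase of the Nash product
  have hprodpos : 0 < ∏ m ∈ Finset.univ.erase i, ((∑ l, α m l * R m l) - RC m) :=
    Finset.prod_pos (fun m _ => hs m)
  have hlt : (∏ m, ((∑ l, α m l * R m l) - RC m)) <
      ∏ m, ((∑ l, β m l * R m l) - RC m) := by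
    rw [← Finset.mul_prod_erase Finset.univ
        (fun m => (∑ l, α m l * R m l) - RC m) (Finset.mem_univ i),
      ← Finset.mul_prod_erase Finset.univ
        (fun m => (∑ l, β m l * R m l) - RC m) (Finset.mem_univ i)]
    have heq : ∏ m ∈ Finset.univ.erase i, ((∑ l, β m l * R m l) - RC m) =
        ∏ m ∈ Finset.univ.erase i, ((∑ l, α m l * R m l) - RC m) :=
      Finset.prod_congr rfl (fun m hm => hsm m (Finset.ne_of_mem_erase hm))
    rw [heq]
    apply mul_lt_mul_of_pos_right _ hprodpos
    rw [hrate_i]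
    nlinarith [mul_pos ht hc]
  exact absurd (hmax β hβnn hβsum hβs) (not_le.mpr hlt)

/-- If for every pair of distinct players the ratios `L_{ij}(k) = R_i(k)/R_j(k)` are
pairwise distinct in `k`, then at a Nash-product maximizer each pair of players
shares at most one frequency bin; hence at most `C(N,2)` bins are shared by two
or more players. -/
theorem nbs_at_most_choose_two_shared_bins
    (N K : ℕ) (R : Fin N → Fin K → ℝ) (hR : ∀ i k, 0 < R i k)
    (RC : Fin N → ℝ)
    (hdist : ∀ i j : Fin N, i ≠ j → ∀ k k' : Fin K, k ≠ k' →
      R i k / R j k ≠ R i k' / R j k')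
    (α : Fin N → Fin K → ℝ)
    (hα : ∀ i k, 0 ≤ α i k) (hαsum : ∀ k, ∑ i, α i k = 1)
    (hs : ∀ i, 0 < (∑ k, α i k * R i k) - RC i)
    (hmax : ∀ β : Fin N → Fin K → ℝ, (∀ i k, 0 ≤ β i k) → (∀ k, ∑ i, β i k = 1) →
      (∀ i, 0 < (∑ k, β i k * R i k) - RC i) →
      (∏ i, ((∑ k, β i k * R i k) - RC i)) ≤ ∏ i, ((∑ k, α i k * R i k) - RC i)) :
    (∀ i j : Fin N, i ≠ j → ∀ k k' : Fin K,
      (0 < α i k ∧ 0 < α j k) → (0 < α i k' ∧ 0 < α j k') → k = k') ∧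
    (Finset.univ.filter (fun k : Fin K =>
        ∃ i j : Fin N, i ≠ j ∧ 0 < α i k ∧ 0 < α j k)).card ≤ N.choose 2 := by
  have part1 : ∀ i j : Fin N, i ≠ j → ∀ k k' : Fin K,
      (0 < α i k ∧ 0 < α j k) → (0 < α i k' ∧ 0 < α j k') → k = k' := by
    intro i j hij k k' ⟨h1, h2⟩ ⟨h3, h4⟩
    by_contra hkk'
    rcases lt_trichotomy (R j k' * R i k - R j k * R i k') 0 with hc | hc | hc
    · -- swap roles of k and k'
      exact nbs_no_two_shared_aux N K R hR RC α hα hαsum hs hmax i j hij k' k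
        (Ne.symm hkk') h4 h1 (by linarith)
    · -- ratios equal, contradiction with hdist
      refine hdist i j hij k k' hkk' ?_
      rw [div_eq_div_iff (hR j k).ne' (hR j k').ne']
      nlinarith
    · exact nbs_no_two_shared_aux N K R hR RC α hα hαsum hs hmax i j hij k k'
        hkk' h2 h3 hc
  refine ⟨part1, ?_⟩
  classical
  set S := Finset.univ.filter (fun k : Fin K =>
      ∃ i j : Fin N, i ≠ j ∧ 0 < α i k ∧ 0 < α j k) with hS
  have hchoice : ∀ k ∈ S, ∃ p : Fin N × Fin N,
      p.1 ≠ p.2 ∧ 0 < α p.1 k ∧ 0 < α p.2 k := by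
    intro k hk
    rw [hS, Finset.mem_filter] at hk
    obtain ⟨_, i, j, hij, h1, h2⟩ := hk
    exact ⟨(i, j), hij, h1, h2⟩
  choose f hf using hchoice
  have hcard : S.card ≤ (Finset.univ.powersetCard 2 : Finset (Finset (Fin N))).card := by
    apply Finset.card_le_card_of_injOn
      (fun k => if h : k ∈ S then {(f k h).1, (f k h).2} else ∅)
    · intro k hk
      have hkS : k ∈ S := hk
      rw [Finset.mem_coe]; dsimp only
      rw [dif_pos hkS, Finset.mem_powersetCard]
      exact ⟨Finset.subset_univ _, Finset.card_pair (hf k hkS).1⟩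
    · intro k hk k' hk' heq
      have hkS : k ∈ S := hk
      have hk'S : k' ∈ S := hk'
      simp only [dif_pos hkS, dif_pos hk'S] at heq
      obtain ⟨hij, h1, h2⟩ := hf k hkS
      obtain ⟨hij', h1', h2'⟩ := hf k' hk'S
      set i := (f k hkS).1; set j := (f k hkS).2
      set i' := (f k' hk'S).1; set j' := (f k' hk'S).2
      have hmem : i' ∈ ({i, j} : Finset (Fin N)) := by
        rw [heq]; simp
      have hmem2 : j' ∈ ({i, j} : Finset (Fin N)) := by
        rw [heq]; simp
      simp only [Finset.mem_insert, Finset.mem_singleton] at hmem hmem2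
      rcases hmem with h | h
      · rcases hmem2 with h' | h'
        · exact absurd (h.trans h'.symm) hij'
        · exact part1 i j hij k k' ⟨h1, h2⟩ ⟨h ▸ h1', h' ▸ h2'⟩
      · rcases hmem2 with h' | h'
        · exact part1 i j hij k k' ⟨h1, h2⟩ ⟨h' ▸ h2', h ▸ h1'⟩
        · exact absurd (h.trans h'.symm) hij'
  calc S.card ≤ (Finset.univ.powersetCard 2 : Finset (Finset (Fin N))).card := hcard
    _ = N.choose 2 := by rw [Finset.card_powersetCard, Finset.card_univ, Fintype.card_fin]
end

section
/- Consider the two-player joint FDM/TDM game with per-bin rates R₁(k), R₂(k) > 0, k = 1,…,K, whose ratios L(k) = R₁(k)/R₂(k) are nonincreasing in k, and competitive rates R_{1C}, R_{2C}. Suppose there exists a feasible allocation with both surpluses strictly positive (i.e., a Nash bargaining solution exists). Then there exists a maximizer α* : {1,…,K} → [0,1] of the Nash product (Σ_k α(k)R₁(k) − R_{1C})·(Σ_k (1−α(k))R₂(k) − R_{2C}) over feasible allocations with nonnegative surpluses, and an index k_s ∈ {1,…,K}, such that α*(k) = 1 for all k < k_s and α*(k) = 0 for all k > k_s; i.e.,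 at most the single bin k_s is time-shared between the two players. -/
open Finset

/-- Threshold allocation parametrized by `t`. -/
noncomputable def alph {K : ℕ} (t : ℝ) : Fin K → ℝ := fun k => min 1 (max 0 (t - (k : ℕ)))

lemma alph_mem {K : ℕ} (t : ℝ) (k : Fin K) : alph t k ∈ Set.Icc (0:ℝ) 1 :=
  ⟨le_min zero_le_one (le_max_left _ _), min_le_left _ _⟩

lemma alph_zero {K : ℕ} (k : Fin K) : alph 0 k = 0 := by
  have h : (0:ℝ) - (k:ℕ) ≤ 0 := by
    simp
  unfold alph
  rw [max_eq_left h, min_eq_right zero_le_one]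

lemma alph_K {K : ℕ} (k : Fin K) : alph (K:ℝ) k = 1 := by
  have hk : ((k:ℕ):ℝ) + 1 ≤ (K:ℝ) := by
    have := k.isLt
    exact_mod_cast this
  have h1 : (1:ℝ) ≤ (K:ℝ) - (k:ℕ) := by linarith
  have h2 : (1:ℝ) ≤ max 0 ((K:ℝ) - (k:ℕ)) := le_trans h1 (le_max_right _ _)
  unfold alph
  exact min_eq_left h2

lemma alph_continuous {K : ℕ} (k : Fin K) : Continuous fun t : ℝ => alph t k := by
  unfold alph
  fun_prop

lemma alph_threshold {K : ℕ} (hK : 0 < K) (t : ℝ) (ht : 0 ≤ t) :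
    ∃ ks : Fin K, (∀ k, k < ks → alph t k = 1) ∧ (∀ k, ks < k → alph t k = 0) := by
  refine ⟨⟨min ⌊t⌋₊ (K - 1), by omega⟩, ?_, ?_⟩
  · intro k hk
    have hk' : (k:ℕ) < ⌊t⌋₊ := lt_of_lt_of_le hk (by simp [Fin.le_def])
    have h1 : ((k:ℕ):ℝ) + 1 ≤ t := by
      have : (k:ℕ) + 1 ≤ ⌊t⌋₊ := hk'
      calc ((k:ℕ):ℝ) + 1 ≤ (⌊t⌋₊:ℝ) := by exact_mod_cast this
        _ ≤ t := Nat.floor_le ht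
    have h2 : (1:ℝ) ≤ max 0 (t - (k:ℕ)) := le_trans (by linarith) (le_max_right _ _)
    simp [alph, min_eq_left h2]
  · intro k hk
    have hk1 : min ⌊t⌋₊ (K - 1) < (k:ℕ) := hk
    have hkK : (k:ℕ) ≤ K - 1 := by have := k.isLt; omega
    have hfl : ⌊t⌋₊ < (k:ℕ) := by omega
    have h1 : t < (k:ℕ) := by
      calc t < (⌊t⌋₊:ℝ) + 1 := Nat.lt_floor_add_one t
        _ ≤ ((k:ℕ):ℝ) := by exact_mod_cast hfl
    have h2 : t - (k:ℕ) ≤ 0 := by linarith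
    simp [alph, max_eq_left h2]

/-- Rearrangement / fractional-knapsack lemma: among allocations giving at least
a given total `R₁`-rate to player 1, the threshold allocation minimizes the
`R₂`-rate taken away from player 2. -/
lemma knapsack {K : ℕ} (R₁ R₂ : Fin K → ℝ)
    (hR₁ : ∀ k, 0 < R₁ k) (hR₂ : ∀ k, 0 < R₂ k)
    (hL : ∀ k k' : Fin K, k ≤ k' → R₁ k' / R₂ k' ≤ R₁ k / R₂ k)
    (α β : Fin K → ℝ) (hβ : ∀ k, β k ∈ Set.Icc (0:ℝ) 1)
    (ks : Fin K) (h1 : ∀ k, k < ks → α k = 1) (h0 : ∀ k, ks < k → α k = 0)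
    (hs : ∑ k, α k * R₁ k ≤ ∑ k, β k * R₁ k) :
    ∑ k, α k * R₂ k ≤ ∑ k, β k * R₂ k := by
  set c := R₂ ks / R₁ ks with hc
  have hcpos : 0 < c := div_pos (hR₂ ks) (hR₁ ks)
  have key : ∀ k, c * ((β k - α k) * R₁ k) ≤ (β k - α k) * R₂ k := by
    intro k
    rcases lt_trichotomy k ks with h | h | h
    · rw [h1 k h]
      have hβ1 : β k - 1 ≤ 0 := by linarith [(hβ k).2]
      have hcross : R₁ ks * R₂ k ≤ R₁ k * R₂ ks := by
        have h' := hL k ks h.le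
        rw [div_le_div_iff₀ (hR₂ ks) (hR₂ k)] at h'
        linarith
      have hr : R₂ k ≤ c * R₁ k := by
        rw [hc, div_mul_eq_mul_div, le_div_iff₀ (hR₁ ks)]
        nlinarith
      nlinarith
    · subst h
      have hck : c * R₁ k = R₂ k := div_mul_cancel₀ _ (hR₁ k).ne'
      have : c * ((β k - α k) * R₁ k) = (β k - α k) * R₂ k := by
        rw [← hck]; ring
      exact this.le
    · rw [h0 k h]
      have hβ0 : 0 ≤ β k := (hβ k).1
      have hcross : R₁ k * R₂ ks ≤ R₁ ks * R₂ k := by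
        have h' := hL ks k h.le
        rw [div_le_div_iff₀ (hR₂ k) (hR₂ ks)] at h'
        linarith
      have hr : c * R₁ k ≤ R₂ k := by
        rw [hc, div_mul_eq_mul_div, div_le_iff₀ (hR₁ ks)]
        nlinarith
      nlinarith
  have hsum := Finset.sum_le_sum (fun k (_ : k ∈ Finset.univ) => key k)
  have e1 : ∑ k, c * ((β k - α k) * R₁ k)
      = c * (∑ k, β k * R₁ k - ∑ k, α k * R₁ k) := by
    rw [← Finset.mul_sum]
    congr 1
    rw [← Finset.sum_sub_distrib]
    congr 1; ext k; ring
  have e2 : ∑ k, (β k - α k) * R₂ k = ∑ k, β k * R₂ k - ∑ k, α k * R₂ k := by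
    rw [← Finset.sum_sub_distrib]
    congr 1; ext k; ring
  rw [e1, e2] at hsum
  nlinarith

/-- Two-player joint FDM/TDM game with nonincreasing rate ratios
`L(k) = R₁(k)/R₂(k)`: if a Nash bargaining solution exists (some feasible
allocation gives both players strictly positive surplus), then there is a
Nash-product maximizer `α` of threshold form — `α(k) = 1` for `k < k_s` and
`α(k) = 0` for `k > k_s` — so at most the single bin `k_s` is time-shared. -/
theorem two_player_single_shared_bin
    (K : ℕ) (hK : 0 < K) (R₁ R₂ : Fin K → ℝ)
    (hR₁ : ∀ k, 0 < R₁ k) (hR₂ : ∀ k, 0 < R₂ k)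
    (hL : ∀ k k' : Fin K, k ≤ k' → R₁ k' / R₂ k' ≤ R₁ k / R₂ k)
    (R₁C R₂C : ℝ)
    (hex : ∃ α : Fin K → ℝ, (∀ k, α k ∈ Set.Icc (0 : ℝ) 1) ∧
      0 < (∑ k, α k * R₁ k) - R₁C ∧ 0 < (∑ k, (1 - α k) * R₂ k) - R₂C) :
    ∃ α : Fin K → ℝ, (∀ k, α k ∈ Set.Icc (0 : ℝ) 1) ∧
      0 ≤ (∑ k, α k * R₁ k) - R₁C ∧ 0 ≤ (∑ k, (1 - α k) * R₂ k) - R₂C ∧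
      (∀ β : Fin K → ℝ, (∀ k, β k ∈ Set.Icc (0 : ℝ) 1) →
        0 ≤ (∑ k, β k * R₁ k) - R₁C → 0 ≤ (∑ k, (1 - β k) * R₂ k) - R₂C →
        ((∑ k, β k * R₁ k) - R₁C) * ((∑ k, (1 - β k) * R₂ k) - R₂C) ≤
          ((∑ k, α k * R₁ k) - R₁C) * ((∑ k, (1 - α k) * R₂ k) - R₂C)) ∧
      ∃ ks : Fin K, (∀ k : Fin K, k < ks → α k = 1) ∧ (∀ k : Fin K, ks < k → α k = 0) := by
  obtain ⟨α₀, hα₀, hA₀, hB₀⟩ := hex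
  -- the "one-minus" rewriting identity
  have oneminus : ∀ γ : Fin K → ℝ,
      ∑ k, (1 - γ k) * R₂ k = ∑ k, R₂ k - ∑ k, γ k * R₂ k := by
    intro γ
    rw [← Finset.sum_sub_distrib]
    congr 1; ext k; ring
  -- continuous functions of the parameter t
  set g : ℝ → ℝ := fun t => ∑ k, alph t k * R₁ k with hgdef
  set h : ℝ → ℝ := fun t => ∑ k, alph t k * R₂ k with hhdef
  have hg : Continuous g := by
    apply continuous_finset_sum
    exact fun k _ => (alph_continuous k).mul continuous_const
  have hh : Continuous h := by
    apply continuous_finset_sum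
    exact fun k _ => (alph_continuous k).mul continuous_const
  set A : ℝ → ℝ := fun t => g t - R₁C with hAdef
  set B : ℝ → ℝ := fun t => (∑ k, R₂ k - h t) - R₂C with hBdef
  have hA : Continuous A := hg.sub continuous_const
  have hB : Continuous B := (continuous_const.sub hh).sub continuous_const
  have hg0 : g 0 = 0 := by simp [hgdef, alph_zero]
  have hgK : g (K:ℝ) = ∑ k, R₁ k := by simp [hgdef, alph_K]
  have hKnn : (0:ℝ) ≤ (K:ℝ) := by positivity
  -- IVT: every achievable player-1 total is achieved by a threshold allocation
  have ivt : ∀ s : ℝ, 0 ≤ s → s ≤ ∑ k, R₁ k →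
      ∃ t ∈ Set.Icc (0:ℝ) (K:ℝ), g t = s := by
    intro s hs0 hs1
    have hmem : s ∈ Set.Icc (g 0) (g (K:ℝ)) := by rw [hg0, hgK]; exact ⟨hs0, hs1⟩
    obtain ⟨t, ht, hgt⟩ := intermediate_value_Icc hKnn hg.continuousOn hmem
    exact ⟨t, ht, hgt⟩
  -- For any feasible β, build a threshold t at least as good
  have improve : ∀ β : Fin K → ℝ, (∀ k, β k ∈ Set.Icc (0:ℝ) 1) →
      ∃ t ∈ Set.Icc (0:ℝ) (K:ℝ),
        A t = (∑ k, β k * R₁ k) - R₁C ∧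
        (∑ k, (1 - β k) * R₂ k) - R₂C ≤ B t := by
    intro β hβ
    have hs0 : 0 ≤ ∑ k, β k * R₁ k :=
      Finset.sum_nonneg fun k _ => mul_nonneg (hβ k).1 (hR₁ k).le
    have hs1 : ∑ k, β k * R₁ k ≤ ∑ k, R₁ k :=
      Finset.sum_le_sum fun k _ => mul_le_of_le_one_left (hR₁ k).le (hβ k).2
    obtain ⟨t, ht, hgt⟩ := ivt _ hs0 hs1
    obtain ⟨ks, hks1, hks0⟩ := alph_threshold (K := K) hK t ht.1
    have hknap : h t ≤ ∑ k, β k * R₂ k :=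
      knapsack R₁ R₂ hR₁ hR₂ hL (alph t) β hβ ks hks1 hks0 (le_of_eq hgt)
    refine ⟨t, ht, by simp [hAdef, hgt], ?_⟩
    rw [oneminus β]
    simp only [hBdef]
    linarith
  -- the feasible parameter set
  set T : Set ℝ := Set.Icc (0:ℝ) (K:ℝ) ∩ (A ⁻¹' Set.Ici 0 ∩ B ⁻¹' Set.Ici 0) with hTdef
  have hTc : IsCompact T :=
    isCompact_Icc.inter_right
      ((isClosed_Ici.preimage hA).inter (isClosed_Ici.preimage hB))
  have hTne : T.Nonempty := by
    obtain ⟨t, ht, hAt, hBt⟩ := improve α₀ hα₀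
    exact ⟨t, ht, by simp [Set.mem_preimage]; linarith, by simp [Set.mem_preimage]; linarith⟩
  obtain ⟨ts, htsT, hmax⟩ :=
    hTc.exists_isMaxOn hTne ((hA.mul hB).continuousOn)
  have hts01 := htsT.1
  have hAts : 0 ≤ A ts := htsT.2.1
  have hBts : 0 ≤ B ts := htsT.2.2
  obtain ⟨ks, hks1, hks0⟩ := alph_threshold (K := K) hK ts hts01.1
  refine ⟨alph ts, alph_mem ts, hAts, ?_, ?_, ks, hks1, hks0⟩
  · rw [oneminus (alph ts)]
    simpa [hBdef] using hBts
  · intro β hβ hAβ hBβ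
    obtain ⟨t, ht, hAt, hBt⟩ := improve β hβ
    have htT : t ∈ T := by
      refine ⟨ht, ?_, ?_⟩
      · simp only [Set.mem_preimage, Set.mem_Ici, hAt]; exact hAβ
      · simp only [Set.mem_preimage, Set.mem_Ici]; linarith
    have hle : A t * B t ≤ A ts * B ts := hmax htT
    have step : ((∑ k, β k * R₁ k) - R₁C) * ((∑ k, (1 - β k) * R₂ k) - R₂C)
        ≤ A t * B t := by
      rw [hAt]
      exact mul_le_mul_of_nonneg_left hBt hAβ
    have hfinal : A ts * B ts
        = ((∑ k, alph ts k * R₁ k) - R₁C) * ((∑ k, (1 - alph ts k) * R₂ k) - R₂C) := by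
      rw [oneminus (alph ts)]
    rw [← hfinal]
    exact step.trans hle
end

section
/- Consider the two-player joint FDM/TDM game with per-bin rates R₁(k), R₂(k) > 0 whose ratios L(k) = R₁(k)/R₂(k) are nonincreasing in k, and define A_k = Σ_{m=1}^k R₁(m) − R_{1C}, B_k = Σ_{m=k+1}^K R₂(m) − R_{2C}, Γ_k = A_k/B_k, k_min = min{k : A_k ≥ 0}, k_max = min{k : B_k < 0}. Suppose a Nash bargaining solution exists and let k_s be the smallest integer with k_min ≤ k_s < k_max and L(k_s) ≤ Γ_{k_s}. Then there is a Nash-product maximizer of threshold form with α(k) = 1 for k < k_s, α(k) = 0 for k > k_s, and α(k_s) = max{0, g}, where g = 1 + (B_{k_s}/(2·R₂(k_s)))·(1 − Γ_{k_s}/L(k_s)). -/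
set_option maxHeartbeats 1000000


/-- Two-player joint FDM/TDM game over bins `1,…,K` with nonincreasing rate
ratios `L(k) = R₁(k)/R₂(k)`. With `A_k = ∑_{m=1}^k R₁(m) − R₁C`,
`B_k = ∑_{m=k+1}^K R₂(m) − R₂C`, `Γ_k = A_k/B_k`,
`k_min = min{k : A_k ≥ 0}`, `k_max = min{k : B_k < 0}`, if a Nash bargaining
solution exists and `k_s` is the smallest integer with `k_min ≤ k_s < k_max`
and `L(k_s) ≤ Γ_{k_s}`, then there is a Nash-product maximizer of threshold
form with `α(k) = 1` for `k < k_s`, `α(k) = 0` for `k > k_s`, and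
`α(k_s) = max {0, g}` where `g = 1 + (B_{k_s}/(2R₂(k_s)))(1 − Γ_{k_s}/L(k_s))`. -/
theorem two_player_threshold_maximizer
    (K : ℕ) (hK : 0 < K) (R₁ R₂ : ℕ → ℝ)
    (hR₁ : ∀ k ∈ Finset.Icc 1 K, 0 < R₁ k) (hR₂ : ∀ k ∈ Finset.Icc 1 K, 0 < R₂ k)
    (hL : ∀ k k' : ℕ, 1 ≤ k → k ≤ k' → k' ≤ K → R₁ k' / R₂ k' ≤ R₁ k / R₂ k)
    (R₁C R₂C : ℝ)
    (A B : ℕ → ℝ)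
    (hA : ∀ k, A k = (∑ m ∈ Finset.Icc 1 k, R₁ m) - R₁C)
    (hB : ∀ k, B k = (∑ m ∈ Finset.Icc (k + 1) K, R₂ m) - R₂C)
    (kmin kmax : ℕ)
    (hkmin : kmin ∈ Finset.Icc 1 K ∧ 0 ≤ A kmin ∧ ∀ k, 1 ≤ k → k < kmin → A k < 0)
    (hkmax : kmax ∈ Finset.Icc 1 K ∧ B kmax < 0 ∧ ∀ k, 1 ≤ k → k < kmax → 0 ≤ B k)
    (hex : ∃ α : ℕ → ℝ, (∀ k ∈ Finset.Icc 1 K, α k ∈ Set.Icc (0 : ℝ) 1) ∧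
      0 < (∑ k ∈ Finset.Icc 1 K, α k * R₁ k) - R₁C ∧
      0 < (∑ k ∈ Finset.Icc 1 K, (1 - α k) * R₂ k) - R₂C)
    (ks : ℕ)
    (hks : kmin ≤ ks ∧ ks < kmax ∧ R₁ ks / R₂ ks ≤ A ks / B ks ∧
      ∀ k, kmin ≤ k → k < ks → A k / B k < R₁ k / R₂ k) :
    ∃ α : ℕ → ℝ, (∀ k ∈ Finset.Icc 1 K, α k ∈ Set.Icc (0 : ℝ) 1) ∧
      (∀ k, 1 ≤ k → k < ks → α k = 1) ∧
      (∀ k, ks < k → k ≤ K → α k = 0) ∧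
      α ks = max 0 (1 + B ks / (2 * R₂ ks) * (1 - (A ks / B ks) / (R₁ ks / R₂ ks))) ∧
      (∀ β : ℕ → ℝ, (∀ k ∈ Finset.Icc 1 K, β k ∈ Set.Icc (0 : ℝ) 1) →
        0 < (∑ k ∈ Finset.Icc 1 K, β k * R₁ k) - R₁C →
        0 < (∑ k ∈ Finset.Icc 1 K, (1 - β k) * R₂ k) - R₂C →
        ((∑ k ∈ Finset.Icc 1 K, β k * R₁ k) - R₁C) *
            ((∑ k ∈ Finset.Icc 1 K, (1 - β k) * R₂ k) - R₂C) ≤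
          ((∑ k ∈ Finset.Icc 1 K, α k * R₁ k) - R₁C) *
            ((∑ k ∈ Finset.Icc 1 K, (1 - α k) * R₂ k) - R₂C)) := by
  obtain ⟨hkminmem, hAkmin, hAneg⟩ := hkmin
  obtain ⟨hkmaxmem, hBkmax, hBnn⟩ := hkmax
  obtain ⟨hks1, hks2, hks3, hks4⟩ := hks
  clear hex hK hBkmax hAkmin
  have h1ks : 1 ≤ ks := le_trans (Finset.mem_Icc.mp hkminmem).1 hks1
  have hksK : ks ≤ K := by
    have := (Finset.mem_Icc.mp hkmaxmem).2; omega
  obtain ⟨t, rfl⟩ : ∃ t, ks = t + 1 := ⟨ks - 1, by omega⟩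
  have hR1s : 0 < R₁ (t + 1) := hR₁ _ (Finset.mem_Icc.mpr ⟨by omega, hksK⟩)
  have hR2s : 0 < R₂ (t + 1) := hR₂ _ (Finset.mem_Icc.mpr ⟨by omega, hksK⟩)
  have hR1ne : R₁ (t + 1) ≠ 0 := ne_of_gt hR1s
  have hR2ne : R₂ (t + 1) ≠ 0 := ne_of_gt hR2s
  have hlpos : 0 < R₁ (t + 1) / R₂ (t + 1) := div_pos hR1s hR2s
  have hBpos : 0 < B (t + 1) := by
    rcases (hBnn (t + 1) (by omega) hks2).lt_or_eq with h | h
    · exact h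
    · exfalso; rw [← h, div_zero] at hks3; linarith
  have hBne : B (t + 1) ≠ 0 := ne_of_gt hBpos
  have hAB : (R₁ (t + 1) / R₂ (t + 1)) * B (t + 1) ≤ A (t + 1) := (le_div_iff₀ hBpos).mp hks3
  have hApos : 0 < A (t + 1) := lt_of_lt_of_le (mul_pos hlpos hBpos) hAB
  set g := 1 + B (t + 1) / (2 * R₂ (t + 1)) *
      (1 - A (t + 1) / B (t + 1) / (R₁ (t + 1) / R₂ (t + 1))) with hgdef
  have hgid : g * (2 * R₁ (t + 1) * R₂ (t + 1)) =
      2 * R₁ (t + 1) * R₂ (t + 1) + B (t + 1) * R₁ (t + 1) - A (t + 1) * R₂ (t + 1) := by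
    rw [hgdef]; field_simp; ring
  have hR1eq : R₁ (t + 1) = (R₁ (t + 1) / R₂ (t + 1)) * R₂ (t + 1) :=
    (div_mul_cancel₀ _ hR2ne).symm
  have hBRle : B (t + 1) * R₁ (t + 1) ≤ A (t + 1) * R₂ (t + 1) := by
    have h0 := mul_le_mul_of_nonneg_right hAB hR2s.le
    have h1 : R₁ (t + 1) / R₂ (t + 1) * B (t + 1) * R₂ (t + 1)
        = B (t + 1) * R₁ (t + 1) := by field_simp
    linarith
  have hg1 : g ≤ 1 := by nlinarith [hgid, hBRle, mul_pos hR1s hR2s]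
  set m := max 0 g with hmdef
  have hm0 : 0 ≤ m := le_max_left _ _
  have hm1 : m ≤ 1 := max_le (by norm_num) hg1
  set α : ℕ → ℝ := fun k => if k < t + 1 then 1 else if k = t + 1 then m else 0 with hα
  have hαlt : ∀ k, k < t + 1 → α k = 1 := fun k hk => by simp only [hα]; rw [if_pos hk]
  have hαeqs : α (t + 1) = m := by simp [hα]
  have hαgt : ∀ k, t + 1 < k → α k = 0 := fun k hk => by
    simp only [hα]; rw [if_neg (by omega), if_neg (by omega)]
  -- sum splitting
  have hIccsplit : Finset.Icc 1 K = Finset.Icc 1 (t + 1) ∪ Finset.Icc (t + 2) K := by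
    ext x; simp only [Finset.mem_Icc, Finset.mem_union]; omega
  have hdisj : Disjoint (Finset.Icc 1 (t + 1)) (Finset.Icc (t + 2) K) := by
    rw [Finset.disjoint_left]; intro a ha hb
    simp only [Finset.mem_Icc] at ha hb; omega
  have hsum1 : ∀ f : ℕ → ℝ, ∑ k ∈ Finset.Icc 1 K, f k =
      ((∑ k ∈ Finset.Icc 1 t, f k) + f (t + 1)) + ∑ k ∈ Finset.Icc (t + 2) K, f k := by
    intro f
    rw [hIccsplit, Finset.sum_union hdisj, Finset.sum_Icc_succ_top (by omega : 1 ≤ t + 1)]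
  have hSA : (∑ k ∈ Finset.Icc 1 K, α k * R₁ k) - R₁C
      = A (t + 1) - (1 - m) * R₁ (t + 1) := by
    have e1 : ∑ k ∈ Finset.Icc 1 t, α k * R₁ k = ∑ k ∈ Finset.Icc 1 t, R₁ k :=
      Finset.sum_congr rfl fun k hk => by
        rw [hαlt k (by have := (Finset.mem_Icc.mp hk).2; omega), one_mul]
    have e2 : ∑ k ∈ Finset.Icc (t + 2) K, α k * R₁ k = 0 :=
      Finset.sum_eq_zero fun k hk => by
        rw [hαgt k (by have := (Finset.mem_Icc.mp hk).1; omega), zero_mul]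
    rw [hsum1 (fun k => α k * R₁ k), e1, e2, hαeqs, hA (t + 1),
      Finset.sum_Icc_succ_top (by omega : 1 ≤ t + 1) R₁]
    ring
  have hSB : (∑ k ∈ Finset.Icc 1 K, (1 - α k) * R₂ k) - R₂C
      = B (t + 1) + (1 - m) * R₂ (t + 1) := by
    have e1 : ∑ k ∈ Finset.Icc 1 t, (1 - α k) * R₂ k = 0 :=
      Finset.sum_eq_zero fun k hk => by
        rw [hαlt k (by have := (Finset.mem_Icc.mp hk).2; omega)]; ring
    have e2 : ∑ k ∈ Finset.Icc (t + 2) K, (1 - α k) * R₂ k = ∑ k ∈ Finset.Icc (t + 2) K, R₂ k :=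
      Finset.sum_congr rfl fun k hk => by
        rw [hαgt k (by have := (Finset.mem_Icc.mp hk).1; omega)]; ring
    rw [hsum1 (fun k => (1 - α k) * R₂ k), e1, e2, hαeqs, hB (t + 1)]
    ring
  have hAt : A t = A (t + 1) - R₁ (t + 1) := by
    rw [hA t, hA (t + 1), Finset.sum_Icc_succ_top (by omega : 1 ≤ t + 1) R₁]; ring
  have hBt : B t = B (t + 1) + R₂ (t + 1) := by
    rw [hB t, hB (t + 1)]
    have h : Finset.Icc (t + 1) K = insert (t + 1) (Finset.Icc (t + 2) K) := by
      ext x; simp only [Finset.mem_Icc, Finset.mem_insert]; omega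
    rw [h, Finset.sum_insert (by simp only [Finset.mem_Icc]; omega)]
    ring
  refine ⟨α, ?_, ?_, ?_, hαeqs, ?_⟩
  · intro k _
    rw [Set.mem_Icc]
    simp only [hα]
    split_ifs
    exacts [⟨zero_le_one, le_rfl⟩, ⟨hm0, hm1⟩, ⟨le_rfl, zero_le_one⟩]
  · intro k _ hk; exact hαlt k hk
  · intro k hk _; exact hαgt k hk
  -- the maximizer property
  have hcommon : ∀ l' : ℝ, 0 < l' →
      (∀ k, 1 ≤ k → k < t + 1 → l' * R₂ k ≤ R₁ k) →
      (∀ k, t + 1 < k → k ≤ K → R₁ k ≤ l' * R₂ k) →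
      (R₁ (t + 1) = l' * R₂ (t + 1) ∨ (m = 0 ∧ R₁ (t + 1) ≤ l' * R₂ (t + 1))) →
      A (t + 1) - (1 - m) * R₁ (t + 1) = l' * (B (t + 1) + (1 - m) * R₂ (t + 1)) →
      (∀ β : ℕ → ℝ, (∀ k ∈ Finset.Icc 1 K, β k ∈ Set.Icc (0 : ℝ) 1) →
        0 < (∑ k ∈ Finset.Icc 1 K, β k * R₁ k) - R₁C →
        0 < (∑ k ∈ Finset.Icc 1 K, (1 - β k) * R₂ k) - R₂C →
        ((∑ k ∈ Finset.Icc 1 K, β k * R₁ k) - R₁C) *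
            ((∑ k ∈ Finset.Icc 1 K, (1 - β k) * R₂ k) - R₂C) ≤
          ((∑ k ∈ Finset.Icc 1 K, α k * R₁ k) - R₁C) *
            ((∑ k ∈ Finset.Icc 1 K, (1 - α k) * R₂ k) - R₂C)) := by
    intro l' hl' hlow hhigh hmid hAeq β hβ hAβ hBβ
    have hper : ∀ k ∈ Finset.Icc 1 K, (β k - α k) * R₁ k ≤ l' * ((β k - α k) * R₂ k) := by
      intro k hk
      obtain ⟨hk1, hk2⟩ := Finset.mem_Icc.mp hk
      obtain ⟨hb0, hb1⟩ := Set.mem_Icc.mp (hβ k hk)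
      rcases lt_trichotomy k (t + 1) with h | h | h
      · rw [hαlt k h]
        nlinarith [mul_nonneg (by linarith : (0:ℝ) ≤ 1 - β k)
          (by linarith [hlow k hk1 h] : (0:ℝ) ≤ R₁ k - l' * R₂ k)]
      · subst h
        rw [hαeqs]
        rcases hmid with hm' | ⟨hm0', hle⟩
        · rw [hm']; exact le_of_eq (by ring)
        · rw [hm0']
          nlinarith [mul_nonneg hb0 (by linarith : (0:ℝ) ≤ l' * R₂ (t + 1) - R₁ (t + 1))]
      · rw [hαgt k h]
        nlinarith [mul_nonneg hb0 (by linarith [hhigh k h hk2] : (0:ℝ) ≤ l' * R₂ k - R₁ k)]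
    have hsum := Finset.sum_le_sum hper
    have eβ1 : ∑ k ∈ Finset.Icc 1 K, (β k - α k) * R₁ k =
        (∑ k ∈ Finset.Icc 1 K, β k * R₁ k) - ∑ k ∈ Finset.Icc 1 K, α k * R₁ k := by
      rw [← Finset.sum_sub_distrib]; exact Finset.sum_congr rfl fun k _ => by ring
    have eβ2 : ∑ k ∈ Finset.Icc 1 K, l' * ((β k - α k) * R₂ k) =
        l' * ((∑ k ∈ Finset.Icc 1 K, (1 - α k) * R₂ k) -
          ∑ k ∈ Finset.Icc 1 K, (1 - β k) * R₂ k) := by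
      rw [← Finset.mul_sum]; congr 1
      rw [← Finset.sum_sub_distrib]; exact Finset.sum_congr rfl fun k _ => by ring
    rw [eβ1, eβ2] at hsum
    rw [hSA, hSB]
    set a := (∑ k ∈ Finset.Icc 1 K, β k * R₁ k) - R₁C with ha
    set b := (∑ k ∈ Finset.Icc 1 K, (1 - β k) * R₂ k) - R₂C with hb
    set P := A (t + 1) - (1 - m) * R₁ (t + 1) with hP
    set Q := B (t + 1) + (1 - m) * R₂ (t + 1) with hQ
    clear_value a b P Q
    have hQpos : 0 < Q := by
      have : 0 ≤ (1 - m) * R₂ (t + 1) := mul_nonneg (by linarith) hR2s.le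
      rw [hQ]; linarith
    have hPpos : 0 < P := hAeq ▸ mul_pos hl' hQpos
    have hsum' : a - P ≤ l' * (Q - b) := by
      have e4 : l' * (Q - b) = l' * ((∑ k ∈ Finset.Icc 1 K, (1 - α k) * R₂ k) -
          ∑ k ∈ Finset.Icc 1 K, (1 - β k) * R₂ k) := by
        congr 1; rw [← hSB, hb]; ring
      have e5 : a - P = (∑ k ∈ Finset.Icc 1 K, β k * R₁ k) -
          ∑ k ∈ Finset.Icc 1 K, α k * R₁ k := by
        rw [← hSA, ha]; ring
      rw [e4, e5]; exact hsum
    have h2 : a + l' * b ≤ 2 * P := by nlinarith [hsum', hAeq]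
    have habpos : 0 < a + l' * b := by positivity
    have h3 : (a + l' * b) ^ 2 ≤ (2 * P) ^ 2 := by nlinarith [h2, habpos]
    have hPQ : l' * (P * Q) = P ^ 2 := by rw [hAeq]; ring
    have hfin : l' * (a * b) ≤ l' * (P * Q) := by
      rw [hPQ]; nlinarith [h3, sq_nonneg (a - l' * b)]
    exact (mul_le_mul_iff_right₀ hl').mp hfin
  rcases le_or_gt 0 g with hg0 | hg0
  · -- interior case: α ks = g
    have hm : m = g := max_eq_right hg0
    apply hcommon (R₁ (t + 1) / R₂ (t + 1)) hlpos
    · intro k hk1 hk2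
      have h5 := hL k (t + 1) hk1 (by omega) hksK
      have hR2k := hR₂ k (Finset.mem_Icc.mpr ⟨hk1, by omega⟩)
      exact (le_div_iff₀ hR2k).mp h5
    · intro k h1 h2
      have h5 := hL (t + 1) k (by omega) h1.le h2
      have hR2k := hR₂ k (Finset.mem_Icc.mpr ⟨by omega, h2⟩)
      exact (div_le_iff₀ hR2k).mp h5
    · left; exact hR1eq
    · rw [hm, hgdef]; field_simp; ring
  · -- corner case: α ks = 0
    have hm : m = 0 := max_eq_left hg0.le
    have hcg : R₁ (t + 1) * B (t + 1) + 2 * R₁ (t + 1) * R₂ (t + 1)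
        < A (t + 1) * R₂ (t + 1) := by
      nlinarith [hgid, mul_neg_of_neg_of_pos hg0
        (by positivity : (0:ℝ) < 2 * R₁ (t + 1) * R₂ (t + 1))]
    have hBtpos : 0 < B t := by rw [hBt]; linarith
    have hBtne : B t ≠ 0 := ne_of_gt hBtpos
    have hlBt : (R₁ (t + 1) / R₂ (t + 1)) * B t < A t := by
      rw [hAt, hBt, div_mul_eq_mul_div, div_lt_iff₀ hR2s]
      nlinarith [hcg]
    have hAtpos : 0 < A t := lt_trans (mul_pos hlpos hBtpos) hlBt
    have hl'pos : 0 < A t / B t := div_pos hAtpos hBtpos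
    have hlt : R₁ (t + 1) / R₂ (t + 1) < A t / B t := (lt_div_iff₀ hBtpos).mpr hlBt
    apply hcommon (A t / B t) hl'pos
    · intro k hk1 hk2
      have hkmint : kmin ≤ t := by
        by_contra hcon
        push_neg at hcon
        have := hAneg t (by omega) (by omega)
        linarith
      have h4 := hks4 t hkmint (by omega)
      have h5 := hL k t hk1 (by omega) (by omega)
      have hR2k := hR₂ k (Finset.mem_Icc.mpr ⟨hk1, by omega⟩)
      exact (le_div_iff₀ hR2k).mp (le_trans h4.le h5)
    · intro k h1 h2
      have h5 := hL (t + 1) k (by omega) h1.le h2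
      have hR2k := hR₂ k (Finset.mem_Icc.mpr ⟨by omega, h2⟩)
      exact (div_le_iff₀ hR2k).mp (le_trans h5 hlt.le)
    · right
      exact ⟨hm, (div_le_iff₀ hR2s).mp hlt.le⟩
    · rw [hm, hAt, hBt]
      have hne : B (t + 1) + R₂ (t + 1) ≠ 0 := by
        rw [← hBt]; exact hBtne
      field_simp
      ring
end

section
/- Let S₁, S₂ > 0 and R₁c, R₂c ≥ 0, and define the Nash function F(ρ) = (ρ·log(1 + S₁/ρ) − R₁c) · ((1−ρ)·log(1 + S₂/(1−ρ)) − R₂c) on (0,1). If there exists ρ₀ ∈ (0,1) at which both factors are strictly positive, then F attains its maximum over the set D = {ρ ∈ (0,1) : both factors are nonnegative} at a unique point ρ_NBS ∈ D, and both factors are strictly positive at ρ_NBS. -/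
open Real Set

private noncomputable def nfF (S R ρ : ℝ) : ℝ := ρ * (Real.log (ρ + S) - Real.log ρ) - R

lemma nfum_hasDerivAt (S : ℝ) (hS : 0 < S) (x : ℝ) (hx : 0 < x) :
    HasDerivAt (fun y : ℝ => y * (Real.log (y + S) - Real.log y))
      (Real.log (x + S) - Real.log x + x * ((x + S)⁻¹ - x⁻¹)) x := by
  have h1 : HasDerivAt (fun y : ℝ => Real.log (y + S)) (x + S)⁻¹ x := by
    have := (Real.hasDerivAt_log (show x + S ≠ 0 by positivity)).comp x
      ((hasDerivAt_id x).add_const S)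
    simpa [Function.comp_def] using this
  have h2 := Real.hasDerivAt_log hx.ne'
  have := (hasDerivAt_id x).mul (h1.sub h2)
  exact this.congr_deriv (by simp [one_div])

lemma nfum_concave (S : ℝ) (hS : 0 < S) :
    StrictConcaveOn ℝ (Set.Ioi (0:ℝ)) (fun y : ℝ => y * (Real.log (y + S) - Real.log y)) := by
  apply strictConcaveOn_of_deriv2_neg (convex_Ioi 0)
  · intro x hx
    exact (nfum_hasDerivAt S hS x hx).continuousAt.continuousWithinAt
  · intro x hx
    rw [isOpen_Ioi.interior_eq] at hx
    have hx : (0:ℝ) < x := hx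
    have hD1 : HasDerivAt (fun y : ℝ => Real.log (y + S) - Real.log y + y * ((y + S)⁻¹ - y⁻¹))
        ((x + S)⁻¹ - x⁻¹ + (((x + S)⁻¹ - x⁻¹) + x * (-((x + S)^2)⁻¹ - -(x^2)⁻¹))) x := by
      have h1 : HasDerivAt (fun y : ℝ => Real.log (y + S)) (x + S)⁻¹ x := by
        have := (Real.hasDerivAt_log (show x + S ≠ 0 by positivity)).comp x
          ((hasDerivAt_id x).add_const S)
        simpa [Function.comp_def] using this
      have h2 := Real.hasDerivAt_log hx.ne'
      have h3 : HasDerivAt (fun y : ℝ => (y + S)⁻¹) (-((x + S)^2)⁻¹) x := by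
        have := (hasDerivAt_inv (show x + S ≠ 0 by positivity)).comp x
          ((hasDerivAt_id x).add_const S)
        simpa [Function.comp_def] using this
      have h4 := hasDerivAt_inv hx.ne'
      have := (h1.sub h2).add ((hasDerivAt_id x).mul (h3.sub h4))
      exact this.congr_deriv (by simp only [id_eq, one_mul, Pi.sub_apply])
    have heq : deriv (fun y : ℝ => y * (Real.log (y + S) - Real.log y)) =ᶠ[nhds x]
        (fun y : ℝ => Real.log (y + S) - Real.log y + y * ((y + S)⁻¹ - y⁻¹)) := by
      filter_upwards [isOpen_Ioi.mem_nhds hx] with y hy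
      exact (nfum_hasDerivAt S hS y hy).deriv
    have h2d : deriv^[2] (fun y : ℝ => y * (Real.log (y + S) - Real.log y)) x
        = (x + S)⁻¹ - x⁻¹ + (((x + S)⁻¹ - x⁻¹) + x * (-((x + S)^2)⁻¹ - -(x^2)⁻¹)) := by
      show deriv (deriv _) x = _
      rw [heq.deriv_eq, hD1.deriv]
    rw [h2d]
    have hkey : (x + S)⁻¹ - x⁻¹ + (((x + S)⁻¹ - x⁻¹) + x * (-((x + S)^2)⁻¹ - -(x^2)⁻¹))
        = -S^2 / (x * (x + S)^2) := by
      field_simp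
      ring
    rw [hkey]
    apply div_neg_of_neg_of_pos
    · nlinarith
    · positivity

/-- midpoint strict concavity for `nfF` -/
lemma nfum_mid (S R x y : ℝ) (hS : 0 < S) (hx : 0 < x) (hy : 0 < y) (hne : x ≠ y) :
    (nfF S R x + nfF S R y) / 2 < nfF S R ((x + y) / 2) := by
  have hc := (nfum_concave S hS).2 (show x ∈ Ioi (0:ℝ) from hx)
    (show y ∈ Ioi (0:ℝ) from hy) hne (by norm_num : (0:ℝ) < 1/2)
    (by norm_num : (0:ℝ) < 1/2) (by norm_num)
  simp only [smul_eq_mul] at hc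
  have hmid : (1:ℝ)/2 * x + 1/2 * y = (x + y)/2 := by ring
  rw [hmid] at hc
  simp only [nfF]
  linarith

lemma nfum_log_form (S x : ℝ) (hS : 0 < S) (hx : 0 < x) :
    Real.log (1 + S / x) = Real.log (x + S) - Real.log x := by
  rw [show (1 + S / x) = (x + S)/x by field_simp,
    Real.log_div (by positivity) hx.ne']

lemma nfum_pos_pair (a b c : ℝ) (ha : 0 ≤ a) (hb : 0 ≤ b) (hc : 0 < c) (h : c ≤ a * b) :
    0 < a ∧ 0 < b := by
  constructor <;> nlinarith

lemma nfum_cont (S R : ℝ) (hS : 0 < S) : ContinuousOn (nfF S R) (Icc 0 1) := by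
  have : nfF S R = fun ρ : ℝ => ρ * Real.log (ρ + S) - ρ * Real.log ρ - R := by
    funext ρ; simp only [nfF]; ring
  rw [this]
  apply ContinuousOn.sub _ continuousOn_const
  apply ContinuousOn.sub
  · exact continuousOn_id.mul (((continuous_id.add continuous_const).continuousOn).log
      (fun x hx => by have := hx.1; show x + S ≠ 0; positivity))
  · exact Real.continuous_mul_log.continuousOn


set_option maxHeartbeats 1000000 in
/-- The Nash function `F(ρ) = (ρ log(1+S₁/ρ) − R₁c)((1−ρ) log(1+S₂/(1−ρ)) − R₂c)`
attains its maximum over `D = {ρ ∈ (0,1) : both factors ≥ 0}` at a unique point,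
provided some `ρ₀ ∈ (0,1)` makes both factors strictly positive; moreover at the
maximizer both factors are strictly positive. -/
theorem nash_function_unique_maximizer
    (S₁ S₂ R₁c R₂c : ℝ) (hS₁ : 0 < S₁) (hS₂ : 0 < S₂)
    (hR₁c : 0 ≤ R₁c) (hR₂c : 0 ≤ R₂c)
    (hex : ∃ ρ₀ ∈ Set.Ioo (0 : ℝ) 1,
      0 < ρ₀ * Real.log (1 + S₁ / ρ₀) - R₁c ∧
      0 < (1 - ρ₀) * Real.log (1 + S₂ / (1 - ρ₀)) - R₂c) :
    (∃! ρ : ℝ, (ρ ∈ Set.Ioo (0 : ℝ) 1 ∧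
        0 ≤ ρ * Real.log (1 + S₁ / ρ) - R₁c ∧
        0 ≤ (1 - ρ) * Real.log (1 + S₂ / (1 - ρ)) - R₂c) ∧
      ∀ ρ' ∈ Set.Ioo (0 : ℝ) 1,
        0 ≤ ρ' * Real.log (1 + S₁ / ρ') - R₁c →
        0 ≤ (1 - ρ') * Real.log (1 + S₂ / (1 - ρ')) - R₂c →
        (ρ' * Real.log (1 + S₁ / ρ') - R₁c) *
            ((1 - ρ') * Real.log (1 + S₂ / (1 - ρ')) - R₂c) ≤
          (ρ * Real.log (1 + S₁ / ρ) - R₁c) *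
            ((1 - ρ) * Real.log (1 + S₂ / (1 - ρ)) - R₂c)) ∧
    (∀ ρ : ℝ, (ρ ∈ Set.Ioo (0 : ℝ) 1 ∧
        0 ≤ ρ * Real.log (1 + S₁ / ρ) - R₁c ∧
        0 ≤ (1 - ρ) * Real.log (1 + S₂ / (1 - ρ)) - R₂c) →
      (∀ ρ' ∈ Set.Ioo (0 : ℝ) 1,
        0 ≤ ρ' * Real.log (1 + S₁ / ρ') - R₁c →
        0 ≤ (1 - ρ') * Real.log (1 + S₂ / (1 - ρ')) - R₂c →
        (ρ' * Real.log (1 + S₁ / ρ') - R₁c) *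
            ((1 - ρ') * Real.log (1 + S₂ / (1 - ρ')) - R₂c) ≤
          (ρ * Real.log (1 + S₁ / ρ) - R₁c) *
            ((1 - ρ) * Real.log (1 + S₂ / (1 - ρ)) - R₂c)) →
      0 < ρ * Real.log (1 + S₁ / ρ) - R₁c ∧
      0 < (1 - ρ) * Real.log (1 + S₂ / (1 - ρ)) - R₂c) := by
  have hfid : ∀ ρ ∈ Set.Ioo (0:ℝ) 1,
      ρ * Real.log (1 + S₁ / ρ) - R₁c = nfF S₁ R₁c ρ := by
    intro ρ hρ
    simp only [nfF]
    rw [nfum_log_form S₁ ρ hS₁ hρ.1]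
  have hgid : ∀ ρ ∈ Set.Ioo (0:ℝ) 1,
      (1 - ρ) * Real.log (1 + S₂ / (1 - ρ)) - R₂c = nfF S₂ R₂c (1 - ρ) := by
    intro ρ hρ
    simp only [nfF]
    rw [nfum_log_form S₂ (1 - ρ) hS₂ (by linarith [hρ.2])]
  have hfc := nfum_cont S₁ R₁c hS₁
  have hgc : ContinuousOn (fun ρ : ℝ => nfF S₂ R₂c (1 - ρ)) (Icc 0 1) := by
    have hsub : MapsTo (fun ρ : ℝ => 1 - ρ) (Icc (0:ℝ) 1) (Icc (0:ℝ) 1) := by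
      intro x hx
      simp only [mem_Icc] at hx ⊢
      constructor <;> linarith [hx.1, hx.2]
    exact (nfum_cont S₂ R₂c hS₂).comp ((continuous_const.sub continuous_id).continuousOn) hsub
  set K : Set ℝ := (Icc (0:ℝ) 1 ∩ nfF S₁ R₁c ⁻¹' (Ici 0)) ∩
      (Icc (0:ℝ) 1 ∩ (fun ρ : ℝ => nfF S₂ R₂c (1 - ρ)) ⁻¹' (Ici 0)) with hK_def
  have hKIcc : K ⊆ Icc 0 1 := fun x hx => hx.1.1
  have hK_closed : IsClosed K :=
    (hfc.preimage_isClosed_of_isClosed isClosed_Icc isClosed_Ici).inter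
      (hgc.preimage_isClosed_of_isClosed isClosed_Icc isClosed_Ici)
  have hK_comp : IsCompact K := isCompact_Icc.of_isClosed_subset hK_closed hKIcc
  have hKmem : ∀ x ∈ Set.Ioo (0:ℝ) 1, 0 ≤ nfF S₁ R₁c x → 0 ≤ nfF S₂ R₂c (1 - x) → x ∈ K := by
    intro x hx h1 h2
    exact ⟨⟨⟨hx.1.le, hx.2.le⟩, h1⟩, ⟨⟨hx.1.le, hx.2.le⟩, h2⟩⟩
  obtain ⟨ρ₀, hρ₀, h01, h02⟩ := hex
  rw [hfid ρ₀ hρ₀] at h01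
  rw [hgid ρ₀ hρ₀] at h02
  have hρ₀K : ρ₀ ∈ K := hKmem ρ₀ hρ₀ h01.le h02.le
  have hFc : ContinuousOn (fun ρ => nfF S₁ R₁c ρ * nfF S₂ R₂c (1 - ρ)) K :=
    (hfc.mono hKIcc).mul (hgc.mono hKIcc)
  obtain ⟨ρs, hρsK, hmax⟩ := hK_comp.exists_isMaxOn ⟨ρ₀, hρ₀K⟩ hFc
  have hmax' : ∀ z ∈ K, nfF S₁ R₁c z * nfF S₂ R₂c (1 - z)
      ≤ nfF S₁ R₁c ρs * nfF S₂ R₂c (1 - ρs) := fun z hz => hmax hz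
  have hfs0 : 0 ≤ nfF S₁ R₁c ρs := hρsK.1.2
  have hgs0 : 0 ≤ nfF S₂ R₂c (1 - ρs) := hρsK.2.2
  have hMpos : 0 < nfF S₁ R₁c ρs * nfF S₂ R₂c (1 - ρs) :=
    lt_of_lt_of_le (mul_pos h01 h02) (hmax' ρ₀ hρ₀K)
  obtain ⟨hfs, hgs⟩ := nfum_pos_pair _ _ _ hfs0 hgs0 hMpos le_rfl
  have hρs0 : ρs ≠ 0 := by
    intro h
    rw [h] at hfs
    simp [nfF] at hfs
    linarith
  have hρs1 : ρs ≠ 1 := by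
    intro h
    rw [h] at hgs
    simp [nfF] at hgs
    linarith
  have hρsIoo : ρs ∈ Set.Ioo (0:ℝ) 1 :=
    ⟨lt_of_le_of_ne hρsK.1.1.1 (Ne.symm hρs0), lt_of_le_of_ne hρsK.1.1.2 hρs1⟩
  have hmaxP : ∀ ρ' ∈ Set.Ioo (0 : ℝ) 1,
      0 ≤ ρ' * Real.log (1 + S₁ / ρ') - R₁c →
      0 ≤ (1 - ρ') * Real.log (1 + S₂ / (1 - ρ')) - R₂c →
      (ρ' * Real.log (1 + S₁ / ρ') - R₁c) *
          ((1 - ρ') * Real.log (1 + S₂ / (1 - ρ')) - R₂c) ≤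
        (ρs * Real.log (1 + S₁ / ρs) - R₁c) *
          ((1 - ρs) * Real.log (1 + S₂ / (1 - ρs)) - R₂c) := by
    intro ρ' hρ' h1 h2
    rw [hfid ρ' hρ', hgid ρ' hρ', hfid ρs hρsIoo, hgid ρs hρsIoo]
    rw [hfid ρ' hρ'] at h1
    rw [hgid ρ' hρ'] at h2
    exact hmax' ρ' (hKmem ρ' hρ' h1 h2)
  have hposP : ∀ ρ : ℝ, (ρ ∈ Set.Ioo (0 : ℝ) 1 ∧
      0 ≤ ρ * Real.log (1 + S₁ / ρ) - R₁c ∧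
      0 ≤ (1 - ρ) * Real.log (1 + S₂ / (1 - ρ)) - R₂c) →
      (∀ ρ' ∈ Set.Ioo (0 : ℝ) 1,
        0 ≤ ρ' * Real.log (1 + S₁ / ρ') - R₁c →
        0 ≤ (1 - ρ') * Real.log (1 + S₂ / (1 - ρ')) - R₂c →
        (ρ' * Real.log (1 + S₁ / ρ') - R₁c) *
            ((1 - ρ') * Real.log (1 + S₂ / (1 - ρ')) - R₂c) ≤
          (ρ * Real.log (1 + S₁ / ρ) - R₁c) *
            ((1 - ρ) * Real.log (1 + S₂ / (1 - ρ)) - R₂c)) →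
      0 < ρ * Real.log (1 + S₁ / ρ) - R₁c ∧
      0 < (1 - ρ) * Real.log (1 + S₂ / (1 - ρ)) - R₂c := by
    intro ρ hmem hm
    obtain ⟨hρ, h1, h2⟩ := hmem
    have key := hm ρ₀ hρ₀ (by rw [hfid ρ₀ hρ₀]; exact h01.le)
      (by rw [hgid ρ₀ hρ₀]; exact h02.le)
    rw [hfid ρ₀ hρ₀, hgid ρ₀ hρ₀] at key
    exact nfum_pos_pair _ _ _ h1 h2 (mul_pos h01 h02) key
  refine ⟨⟨ρs, ⟨⟨hρsIoo, by rw [hfid ρs hρsIoo]; exact hfs0,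
      by rw [hgid ρs hρsIoo]; exact hgs0⟩, hmaxP⟩, ?_⟩, hposP⟩
  rintro y ⟨⟨hyIoo, hy1, hy2⟩, hymax⟩
  by_contra hne
  obtain ⟨hfy, hgy⟩ := hposP y ⟨hyIoo, hy1, hy2⟩ hymax
  rw [hfid y hyIoo] at hy1 hfy
  rw [hgid y hyIoo] at hy2 hgy
  have hEq : nfF S₁ R₁c y * nfF S₂ R₂c (1 - y)
      = nfF S₁ R₁c ρs * nfF S₂ R₂c (1 - ρs) := by
    have h1 := hymax ρs hρsIoo (by rw [hfid ρs hρsIoo]; exact hfs0)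
      (by rw [hgid ρs hρsIoo]; exact hgs0)
    have h2 := hmaxP y hyIoo (by rw [hfid y hyIoo]; exact hy1)
      (by rw [hgid y hyIoo]; exact hy2)
    rw [hfid ρs hρsIoo, hgid ρs hρsIoo, hfid y hyIoo, hgid y hyIoo] at h1 h2
    linarith
  have hmIoo : (y + ρs) / 2 ∈ Set.Ioo (0:ℝ) 1 := by
    constructor
    · have h1 := hyIoo.1; have h2 := hρsIoo.1; linarith
    · have h1 := hyIoo.2; have h2 := hρsIoo.2; linarith
  have hfm := nfum_mid S₁ R₁c y ρs hS₁ hyIoo.1 hρsIoo.1 hne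
  have hgm : (nfF S₂ R₂c (1 - y) + nfF S₂ R₂c (1 - ρs)) / 2
      < nfF S₂ R₂c (1 - (y + ρs) / 2) := by
    have := nfum_mid S₂ R₂c (1 - y) (1 - ρs) hS₂ (by linarith [hyIoo.2])
      (by linarith [hρsIoo.2]) (by intro h; exact hne (by linarith))
    have heq : ((1 - y) + (1 - ρs)) / 2 = 1 - (y + ρs) / 2 := by ring
    rwa [heq] at this
  have hA : 0 < (nfF S₁ R₁c y + nfF S₁ R₁c ρs) / 2 := by linarith
  have hB : 0 < (nfF S₂ R₂c (1 - y) + nfF S₂ R₂c (1 - ρs)) / 2 := by linarith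
  have hprod := mul_lt_mul'' hfm hgm hA.le hB.le
  have hAMGM : nfF S₁ R₁c ρs * nfF S₂ R₂c (1 - ρs)
      ≤ (nfF S₁ R₁c y + nfF S₁ R₁c ρs) / 2 *
        ((nfF S₂ R₂c (1 - y) + nfF S₂ R₂c (1 - ρs)) / 2) := by
    nlinarith [sq_nonneg (nfF S₁ R₁c y * nfF S₂ R₂c (1 - ρs)
        - nfF S₁ R₁c ρs * nfF S₂ R₂c (1 - ρs)),
      mul_pos hfy hgs, mul_pos hfs hgy, mul_pos hfy hgy]
  have hle := hmaxP ((y + ρs) / 2) hmIoo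
    (by rw [hfid _ hmIoo]; linarith)
    (by rw [hgid _ hmIoo]; linarith)
  rw [hfid _ hmIoo, hgid _ hmIoo, hfid ρs hρsIoo, hgid ρs hρsIoo] at hle
  linarith
end
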